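/- arXiv:1006.5574 — 5 statements merged into one kernel-verified Lean document; each statement's English description precedes it below -/
import Mathlib

section
/- Let V be an n-dimensional vector space, let {b_1,…,b_n} and {a_1,…,a_n} be two bases of V, and let i ∈ {1,…,n−1}. Then there exists a bijection φ from the i-element subsets of [n] = {1,…,n} to the (n−i)-element subsets of [n] such that for every i-element subset I ⊆ [n], the set {b_k : k ∈ I} ∪ {a_j : j ∈ φ(I)} is a basis of V. -/
/-!
The bases of `⋀^(n-i) V` induced by `b` and `a` differ by an invertible matrix whose `(S, T)`
entry is the minor of the matrix of `a` in `b` with rows `S` and columns `T`. A matrix with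
nonzero determinant has a nonzero term in its Leibniz expansion: a permutation `σ` of the
`(n-i)`-subsets with all entries at `(σ T, T)` nonzero. Since `b_I ∪ a_J` is a basis exactly
when the minor with rows `Iᶜ` and columns `J` is a unit (block triangular determinant),
`φ I = σ⁻¹ Iᶜ` works.
-/

theorem Matrix.exists_perm_forall_ne_zero_of_det_ne_zero {ι R : Type*} [Fintype ι]
    [DecidableEq ι] [CommRing R] {M : Matrix ι ι R} (hM : M.det ≠ 0) :
    ∃ σ : Equiv.Perm ι, ∀ x, M (σ x) x ≠ 0 := by
  contrapose! hM
  rw [Matrix.det_apply]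
  refine Finset.sum_eq_zero fun σ _ => ?_
  obtain ⟨x, hx⟩ := hM σ
  rw [Finset.prod_eq_zero (f := fun i => M (σ i) i) (Finset.mem_univ x) hx, smul_zero]

theorem Set.bijOn_of_equiv {α β : Type*} {s : Set α} {t : Set β} (e : s ≃ t) {f : α → β}
    (hf : ∀ x : s, f x = e x) : Set.BijOn f s t := by
  refine ⟨fun x hx => hf ⟨x, hx⟩ ▸ (e _).2, fun x hx y hy hxy => ?_, fun y hy => ?_⟩
  · rw [hf ⟨x, hx⟩, hf ⟨y, hy⟩] at hxy
    exact congrArg Subtype.val (e.injective (Subtype.ext hxy))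
  · exact ⟨e.symm ⟨y, hy⟩, (e.symm _).2, by rw [hf]; simp⟩

open Set.powersetCard in
theorem exteriorPower.basis_toMatrix_ιMulti_family_apply {R M I : Type*} [CommRing R]
    [AddCommGroup M] [Module R M] [LinearOrder I] {n : ℕ} (b : Module.Basis I R M) (v : I → M)
    (s t : Set.powersetCard I n) :
    (b.exteriorPower n).toMatrix (ιMulti_family R n v) s t =
      ((b.toMatrix v).submatrix (ofFinEmbEquiv.symm s) (ofFinEmbEquiv.symm t)).det := by
  rw [Module.Basis.toMatrix_apply, basis_repr_apply, ιMulti_family, ιMultiDual_apply_ιMulti,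
    ← Matrix.det_transpose]
  rfl

namespace Module.Basis

variable {R V ι : Type*} [CommRing R] [AddCommGroup V] [Module R V]

theorem sumElim_isBasis_iff {κ : Type*} [Fintype ι] [Fintype κ] [DecidableEq κ]
    (b : Basis ι R V) (f : κ ↪ ι) (w : κ → V) :
    (LinearIndependent R (Sum.elim (fun x : {x // x ∉ Set.range f} => b x) w) ∧
      Submodule.span R (Set.range (Sum.elim (fun x : {x // x ∉ Set.range f} => b x) w)) = ⊤) ↔
      IsUnit ((b.toMatrix w).submatrix f id).det := by
  classical
  let e : ι ≃ {x // x ∉ Set.range f} ⊕ κ :=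
    (Equiv.sumCompl (· ∈ Set.range f)).symm.trans <| (Equiv.sumComm _ _).trans <|
      Equiv.sumCongr (Equiv.refl _) (Equiv.ofInjective f f.injective).symm
  have he : ∀ k, e.symm (Sum.inr k) = f k := fun k => by simp [e]
  have he' : ∀ x, e.symm (Sum.inl x) = x := fun x => by simp [e]
  have hnotMem : ∀ (x : {x // x ∉ Set.range f}) k, (x : ι) ≠ f k :=
    fun x k h => x.2 ⟨k, h.symm⟩
  have hblocks : (b.reindex e).toMatrix (Sum.elim (fun x : {x // x ∉ Set.range f} => b x) w) =
      Matrix.fromBlocks 1 ((b.toMatrix w).submatrix (↑) id) 0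
        ((b.toMatrix w).submatrix f id) := by
    ext (x | k) (y | l) <;>
      simp only [toMatrix_apply, repr_reindex_apply, he, he', Sum.elim_inl, Sum.elim_inr,
        Matrix.fromBlocks_apply₁₁, Matrix.fromBlocks_apply₁₂, Matrix.fromBlocks_apply₂₁,
        Matrix.fromBlocks_apply₂₂, Matrix.submatrix_apply, id, repr_self] <;>
      simp [Matrix.one_apply, Finsupp.single_apply, Subtype.ext_iff, eq_comm, hnotMem]
  rw [(b.reindex e).is_basis_iff_det, det_apply, hblocks, Matrix.det_fromBlocks_zero₂₁,
    Matrix.det_one, one_mul]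

open Set.powersetCard in
theorem isBasis_image_union_of_isUnit_exteriorPower_toMatrix [Fintype ι] [LinearOrder ι]
    (b a : Basis ι R V) {r : ℕ} {I : Finset ι} {S T : Set.powersetCard ι r}
    (hS : (S : Finset ι) = Iᶜ)
    (h : IsUnit ((b.exteriorPower r).toMatrix (a.exteriorPower r) S T)) :
    LinearIndepOn R id (b '' I ∪ a '' T) ∧ Submodule.span R (b '' I ∪ a '' T) = ⊤ := by
  rw [exteriorPower.coe_basis, exteriorPower.basis_toMatrix_ιMulti_family_apply] at h
  obtain ⟨hli, hspan⟩ := (b.sumElim_isBasis_iff (ofFinEmbEquiv.symm S).toEmbedding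
    (a ∘ ofFinEmbEquiv.symm T)).2 h
  have hrange : ∀ s : Set.powersetCard ι r,
      Set.range (ofFinEmbEquiv.symm s) = ((s : Finset ι) : Set ι) := fun s =>
    Finset.range_orderEmbOfFin _ _
  have hunion : Set.range (Sum.elim (fun x : {x // x ∉ Set.range (ofFinEmbEquiv.symm S)} => b x)
      (a ∘ ofFinEmbEquiv.symm T)) = b '' I ∪ a '' T := by
    rw [Set.Sum.elim_range, Set.range_comp, hrange S, hrange T]
    congr 1
    change Set.range (b ∘ Subtype.val) = _
    rw [Set.range_comp, Subtype.range_coe_subtype, hS]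
    congr 1
    ext x
    simp
  rw [← hunion]
  exact ⟨hli.linearIndepOn_id, hspan⟩

end Module.Basis

theorem stmt9_general (K V : Type*) [Field K] [AddCommGroup V] [Module K V]
    (n : ℕ) (b a : Module.Basis (Fin n) K V)
    (i : ℕ) (hi2 : i ≤ n - 1) :
    ∃ φ : Finset (Fin n) → Finset (Fin n),
      Set.BijOn φ {I : Finset (Fin n) | I.card = i} {J : Finset (Fin n) | J.card = n - i} ∧
      ∀ I : Finset (Fin n), I.card = i →
        LinearIndependent K
          ((↑) : ((⇑b '' (I : Set (Fin n))) ∪ (⇑a '' ((φ I : Set (Fin n)))) : Set V) → V) ∧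
        Submodule.span K ((⇑b '' (I : Set (Fin n))) ∪ (⇑a '' ((φ I : Set (Fin n))))) = ⊤ := by
  classical
  have hcard : (n - i) + i = Fintype.card (Fin n) := by rw [Fintype.card_fin]; omega
  obtain ⟨σ, hσ⟩ := Matrix.exists_perm_forall_ne_zero_of_det_ne_zero
    ((b.exteriorPower (n - i)).isUnit_det (a.exteriorPower (n - i))).ne_zero
  let ψ := (Set.powersetCard.compl hcard).trans σ.symm
  let φ := Function.extend Subtype.val
    (fun I : Set.powersetCard (Fin n) i => (ψ I : Finset (Fin n))) fun _ => ∅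
  have hφ : ∀ I : Set.powersetCard (Fin n) i, φ I = ψ I :=
    Subtype.val_injective.extend_apply _ _
  refine ⟨φ, Set.bijOn_of_equiv ψ hφ, fun I hI => ?_⟩
  let I' := Set.powersetCard.ofCard hI
  rw [show φ I = ψ I' from hφ I']
  refine b.isBasis_image_union_of_isUnit_exteriorPower_toMatrix a
    (S := Set.powersetCard.compl hcard I') rfl (Ne.isUnit ?_)
  simpa [ψ] using hσ (ψ I')

/-- Lemma: given two bases `{b_1,…,b_n}` and `{a_1,…,a_n}` of an `n`-dimensional vector
space `V` and `1 ≤ i ≤ n−1`, there is a bijection `φ` from the `i`-element subsets of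
`[n]` to the `(n−i)`-element subsets of `[n]` such that for every `i`-element subset `I`,
the set `{b_k : k ∈ I} ∪ {a_j : j ∈ φ(I)}` is a basis of `V`. -/
theorem stmt9 (K V : Type*) [Field K] [AddCommGroup V] [Module K V]
    (n : ℕ) (b a : Module.Basis (Fin n) K V)
    (i : ℕ) (hi1 : 1 ≤ i) (hi2 : i ≤ n - 1) :
    ∃ φ : Finset (Fin n) → Finset (Fin n),
      Set.BijOn φ {I : Finset (Fin n) | I.card = i} {J : Finset (Fin n) | J.card = n - i} ∧
      ∀ I : Finset (Fin n), I.card = i →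
        LinearIndependent K
          ((↑) : ((⇑b '' (I : Set (Fin n))) ∪ (⇑a '' ((φ I : Set (Fin n)))) : Set V) → V) ∧
        Submodule.span K ((⇑b '' (I : Set (Fin n))) ∪ (⇑a '' ((φ I : Set (Fin n))))) = ⊤ :=
  stmt9_general K V n b a i hi2
end

section
/- Let K ⊂ ℝ^n be a 0-symmetric convex body, and let a_1,…,a_n ∈ ℤ^n be linearly independent with a_j ∈ λ_j(K)·K for 1 ≤ j ≤ n. Let L̄ be an i-dimensional linear subspace, i ∈ {1,…,n−1}, containing i linearly independent points of ℤ^n, and let j_1 < … < j_{n−i} be indices in [n] such that lin{a_{j_1},…,a_{j_{n−i}}} ∩ L̄ = {0}. Then Π_{j=1}^i λ_j(K ∩ L̄, ℤ^n ∩ L̄) ≥ Π_{k ∈ [n] \ {j_1,…,j_{n−i}}} λ_k(K). -/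
open Finset Pointwise MeasureTheory

/-- The integer lattice `ℤⁿ` viewed as a subset of `ℝⁿ`. -/
def intLattice (n : ℕ) : Set (Fin n → ℝ) := {x | ∀ j, ∃ m : ℤ, x j = (m : ℝ)}

/-- The `i`-th successive minimum (for `1 ≤ i ≤ n`) of a set `K ⊆ ℝⁿ` with respect to `ℤⁿ`:
the infimum of all `l > 0` such that `l • K` contains at least `i` linearly independent
lattice points. -/
noncomputable def succMinima {n : ℕ} (K : Set (Fin n → ℝ)) (i : ℕ) : ℝ :=
  sInf {l : ℝ | 0 < l ∧
    i ≤ Module.finrank ℝ (Submodule.span ℝ ((l • K) ∩ intLattice n))}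

/-- The `i`-th successive minimum of `K` with respect to an arbitrary set `Λ`
(thought of as a lattice, possibly of lower dimension). -/
noncomputable def succMinimaIn {n : ℕ} (K Λ : Set (Fin n → ℝ)) (i : ℕ) : ℝ :=
  sInf {l : ℝ | 0 < l ∧
    i ≤ Module.finrank ℝ (Submodule.span ℝ ((l • K) ∩ Λ))}

/-- Scaling monotonicity for convex sets containing the origin. -/
lemma aux_smul_subset {n : ℕ} {K : Set (Fin n → ℝ)} (hconv : Convex ℝ K)
    (h0 : (0 : Fin n → ℝ) ∈ K) {α β : ℝ} (hα : 0 ≤ α) (hab : α ≤ β) :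
    α • K ⊆ β • K := by
  rcases eq_or_lt_of_le (hα.trans hab) with hβ | hβ
  · have hα0 : α = 0 := le_antisymm (hab.trans hβ.ge) hα
    subst hα0
    rw [← hβ]
  · intro x hx
    obtain ⟨y, hy, rfl⟩ := hx
    refine ⟨(α / β) • y, ?_, ?_⟩
    · have hd : 0 ≤ α / β := by positivity
      have hd1 : α / β ≤ 1 := (div_le_one hβ).mpr hab
      have := hconv h0 hy (by linarith : (0:ℝ) ≤ 1 - α / β) hd (by ring)
      simpa using this
    · show β • ((α / β) • y) = α • y
      rw [smul_smul]
      congr 1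
      field_simp

/-- The origin belongs to the interior of a symmetric convex body. -/
lemma aux_zero_mem_interior {n : ℕ} {K : Set (Fin n → ℝ)} (hconv : Convex ℝ K)
    (hint : (interior K).Nonempty) (hsym : K = -K) :
    (0 : Fin n → ℝ) ∈ interior K := by
  obtain ⟨x, hx⟩ := hint
  have hx0 : K ∈ nhds x := mem_interior_iff_mem_nhds.mp hx
  have hcont : ContinuousAt (fun y : Fin n → ℝ => -y) (-x) := continuous_neg.continuousAt
  have hpre : (fun y : Fin n → ℝ => -y) ⁻¹' K ∈ nhds (-x) :=
    hcont.preimage_mem_nhds (by simpa using hx0)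
  have hKeq : (fun y : Fin n → ℝ => -y) ⁻¹' K = K := by
    ext y
    simp only [Set.mem_preimage]
    constructor
    · intro h
      rw [hsym]
      exact Set.mem_neg.mpr h
    · intro h
      rw [hsym]
      apply Set.mem_neg.mpr
      simpa using h
  have hmx : -x ∈ interior K := mem_interior_iff_mem_nhds.mpr (hKeq ▸ hpre)
  have := hconv.interior hx hmx (by norm_num : (0:ℝ) ≤ 1/2) (by norm_num : (0:ℝ) ≤ 1/2)
    (by norm_num)
  simpa using this

/-- The filtered admissible sets for `succMinima` are nonempty for levels `≤ n`. -/
lemma aux_nonempty {n : ℕ} {K : Set (Fin n → ℝ)}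
    (h0 : (0 : Fin n → ℝ) ∈ interior K) (m : ℕ) (hm : m ≤ n) :
    {l : ℝ | 0 < l ∧
      m ≤ Module.finrank ℝ (Submodule.span ℝ ((l • K) ∩ intLattice n))}.Nonempty := by
  obtain ⟨ε, hε, hball⟩ := Metric.mem_nhds_iff.mp (mem_interior_iff_mem_nhds.mp h0)
  refine ⟨2 / ε, by positivity, ?_⟩
  have hsingle : ∀ j : Fin n, Pi.single j (1:ℝ) ∈ ((2/ε) • K) ∩ intLattice n := by
    intro j
    constructor
    · rw [Set.mem_smul_set_iff_inv_smul_mem₀ (by positivity)]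
      apply hball
      rw [Metric.mem_ball, dist_zero_right]
      have hnorm : ‖(Pi.single j (1:ℝ) : Fin n → ℝ)‖ ≤ 1 := by
        refine (pi_norm_le_iff_of_nonneg zero_le_one).mpr ?_
        intro k
        rcases eq_or_ne k j with rfl | hk
        · simp
        · simp [Pi.single_apply, hk]
      have : ‖(2/ε)⁻¹ • (Pi.single j (1:ℝ) : Fin n → ℝ)‖ = (2/ε)⁻¹ * ‖(Pi.single j (1:ℝ) : Fin n → ℝ)‖ := by
        rw [norm_smul, Real.norm_eq_abs, abs_of_pos (by positivity)]
      rw [this]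
      calc (2/ε)⁻¹ * ‖(Pi.single j (1:ℝ) : Fin n → ℝ)‖ ≤ (2/ε)⁻¹ * 1 := by
            apply mul_le_mul_of_nonneg_left hnorm (by positivity)
        _ = ε / 2 := by field_simp
        _ < ε := by linarith
    · intro k
      refine ⟨if k = j then 1 else 0, ?_⟩
      rw [Pi.single_apply]
      split_ifs <;> simp
  have hspan : Submodule.span ℝ (((2/ε) • K) ∩ intLattice n) = ⊤ := by
    have hsub : Set.range (fun j : Fin n => Pi.single j (1:ℝ)) ⊆
        ((2/ε) • K) ∩ intLattice n := by
      rintro x ⟨j, rfl⟩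
      exact hsingle j
    have h1 : (⊤ : Submodule ℝ (Fin n → ℝ)) ≤
        Submodule.span ℝ (((2/ε) • K) ∩ intLattice n) := by
      have hb := (Pi.basisFun ℝ (Fin n)).span_eq
      rw [← hb]
      apply Submodule.span_le.mpr
      intro x hx
      obtain ⟨j, rfl⟩ := Set.mem_range.mp hx
      rw [Pi.basisFun_apply]
      exact Submodule.subset_span (hsingle j)
    exact le_antisymm le_top h1
  rw [hspan]
  rw [finrank_top]
  rw [Module.finrank_fin_fun]
  exact hm

/-- Monotonicity of successive minima in the index. -/
lemma aux_mono {n : ℕ} {K : Set (Fin n → ℝ)}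
    (h0 : (0 : Fin n → ℝ) ∈ interior K) {m m' : ℕ} (hmm : m ≤ m') (hm' : m' ≤ n) :
    succMinima K m ≤ succMinima K m' := by
  apply csInf_le_csInf
  · exact ⟨0, fun x hx => le_of_lt hx.1⟩
  · exact aux_nonempty h0 m' hm'
  · intro l hl
    exact ⟨hl.1, le_trans hmm hl.2⟩

lemma aux_succMinima_nonneg {n : ℕ} (K : Set (Fin n → ℝ)) (m : ℕ) :
    0 ≤ succMinima K m :=
  Real.sInf_nonneg (fun x hx => le_of_lt hx.1)

lemma aux_succMinimaIn_nonneg {n : ℕ} (K Λ : Set (Fin n → ℝ)) (m : ℕ) :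
    0 ≤ succMinimaIn K Λ m :=
  Real.sInf_nonneg (fun x hx => le_of_lt hx.1)

lemma aux_succMinima_zero {n : ℕ} (K : Set (Fin n → ℝ)) :
    succMinima K 0 = 0 := by
  unfold succMinima
  have : {l : ℝ | 0 < l ∧
      0 ≤ Module.finrank ℝ (Submodule.span ℝ ((l • K) ∩ intLattice n))} = Set.Ioi 0 := by
    ext l
    simp [Set.mem_Ioi]
  rw [this, csInf_Ioi]

/-- Lemma: let `K ⊆ ℝⁿ` be a `0`-symmetric convex body and `a_1,…,a_n ∈ ℤⁿ` linearly
independent with `a_j ∈ λ_j(K)·K`.  Let `L̄` be an `i`-dimensional linear subspace,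
`1 ≤ i ≤ n−1`, containing `i` linearly independent lattice points, and let `J ⊆ [n]`,
`#J = n−i`, be a set of indices with `lin{a_j : j ∈ J} ∩ L̄ = {0}`.  Then
`Π_{j=1}^i λ_j(K ∩ L̄, ℤⁿ ∩ L̄) ≥ Π_{k ∉ J} λ_k(K)`. -/
theorem stmt10 (n : ℕ) (K : Set (Fin n → ℝ))
    (hconv : Convex ℝ K) (hcpt : IsCompact K) (hint : (interior K).Nonempty)
    (hsym : K = -K)
    (a : Fin n → Fin n → ℝ)
    (ha_lat : ∀ j, a j ∈ intLattice n)
    (ha_li : LinearIndependent ℝ a)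
    (ha_mem : ∀ j : Fin n, a j ∈ succMinima K ((j : ℕ) + 1) • K)
    (i : ℕ) (hi1 : 1 ≤ i) (hi2 : i < n)
    (L : Submodule ℝ (Fin n → ℝ)) (hL : Module.finrank ℝ L = i)
    (hLlat : i ≤ Module.finrank ℝ (Submodule.span ℝ ((L : Set (Fin n → ℝ)) ∩ intLattice n)))
    (J : Finset (Fin n)) (hJ : J.card = n - i)
    (hdisj : Submodule.span ℝ (a '' (J : Set (Fin n))) ⊓ L = ⊥) :
    ∏ j ∈ Finset.Icc 1 i,
        succMinimaIn (K ∩ (L : Set (Fin n → ℝ))) ((L : Set (Fin n → ℝ)) ∩ intLattice n) j ≥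
      ∏ k ∈ Finset.univ \ J, succMinima K ((k : ℕ) + 1) := by
  classical
  have h0int : (0 : Fin n → ℝ) ∈ interior K := aux_zero_mem_interior hconv hint hsym
  have h0K : (0 : Fin n → ℝ) ∈ K := interior_subset h0int
  set C : Finset (Fin n) := Finset.univ \ J with hC
  have hCcard : C.card = i := by
    rw [hC, Finset.card_sdiff_of_subset (Finset.subset_univ J), Finset.card_univ, Fintype.card_fin, hJ]
    omega
  set e := C.orderIsoOfFin hCcard with he
  -- count of elements of C below e t
  have hcount : ∀ t : Fin i, (C.filter (fun x => x < (e t : Fin n))).card = (t : ℕ) := by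
    intro t
    have himg : C.filter (fun x => x < (e t : Fin n)) =
        Finset.image (fun s : Fin i => ((e s : Fin n))) (Finset.Iio t) := by
      ext x
      simp only [Finset.mem_filter, Finset.mem_image, Finset.mem_Iio]
      constructor
      · rintro ⟨hxC, hxlt⟩
        refine ⟨e.symm ⟨x, hxC⟩, ?_, by simp⟩
        have : (e (e.symm ⟨x, hxC⟩) : Fin n) < (e t : Fin n) := by simpa using hxlt
        have h2 : e (e.symm ⟨x, hxC⟩) < e t := Subtype.coe_lt_coe.mp this
        exact e.lt_iff_lt.mp h2
      · rintro ⟨s, hst, rfl⟩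
        refine ⟨(e s).2, ?_⟩
        exact Subtype.coe_lt_coe.mpr (e.lt_iff_lt.mpr hst)
    rw [himg, Finset.card_image_of_injective _ (fun s₁ s₂ h =>
      e.injective (Subtype.coe_injective h)), Fin.card_Iio]
  -- the key per-index inequality
  have key : ∀ t : Fin i,
      succMinima K (((e t : Fin n) : ℕ) + 1) ≤
        succMinimaIn (K ∩ (L : Set (Fin n → ℝ))) ((L : Set (Fin n → ℝ)) ∩ intLattice n)
          ((t : ℕ) + 1) := by
    intro t
    set k : Fin n := (e t : Fin n) with hk
    set c := succMinima K ((k : ℕ) + 1) with hc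
    rcases le_or_gt c 0 with hc0 | hc0
    · exact hc0.trans (aux_succMinimaIn_nonneg _ _ _)
    by_contra hcon
    push_neg at hcon
    set μ := succMinimaIn (K ∩ (L : Set (Fin n → ℝ))) ((L : Set (Fin n → ℝ)) ∩ intLattice n)
      ((t : ℕ) + 1) with hμ
    -- the admissible set for μ is nonempty
    have hTne : {l : ℝ | 0 < l ∧ (t : ℕ) + 1 ≤ Module.finrank ℝ (Submodule.span ℝ
        ((l • (K ∩ (L : Set (Fin n → ℝ)))) ∩ ((L : Set (Fin n → ℝ)) ∩ intLattice n)))}.Nonempty := by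
      obtain ⟨s, hsub, hspan, hind⟩ :=
        exists_linearIndependent ℝ ((L : Set (Fin n → ℝ)) ∩ intLattice n)
      have hsfin : s.Finite := Set.finite_coe_iff.mp hind.finite
      obtain ⟨ε, hε, hball⟩ := Metric.mem_nhds_iff.mp (mem_interior_iff_mem_nhds.mp h0int)
      obtain ⟨R, hR⟩ := (hsfin.image (fun x => ‖x‖)).bddAbove
      set R' := max R 0 with hR'
      set l := (R' + 1) / ε with hl
      have hl0 : 0 < l := by positivity
      refine ⟨l, hl0, ?_⟩
      have hssub : s ⊆ (l • (K ∩ (L : Set (Fin n → ℝ)))) ∩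
          ((L : Set (Fin n → ℝ)) ∩ intLattice n) := by
        intro x hx
        have hxL : x ∈ (L : Set (Fin n → ℝ)) := (hsub hx).1
        refine ⟨?_, hsub hx⟩
        rw [Set.mem_smul_set_iff_inv_smul_mem₀ (ne_of_gt hl0)]
        constructor
        · apply hball
          rw [Metric.mem_ball, dist_zero_right, norm_smul, Real.norm_eq_abs,
            abs_of_pos (by positivity)]
          have hxR : ‖x‖ ≤ R' := by
            have : ‖x‖ ∈ (fun x => ‖x‖) '' s := ⟨x, hx, rfl⟩
            exact le_trans (hR this) (le_max_left _ _)
          calc l⁻¹ * ‖x‖ ≤ l⁻¹ * R' := by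
                apply mul_le_mul_of_nonneg_left hxR (by positivity)
            _ = R' * ε / (R' + 1) := by rw [hl]; field_simp
            _ < ε := by
                rw [div_lt_iff₀ (by positivity)]
                have hR'0 : 0 ≤ R' := le_max_right _ _
                nlinarith
        · exact L.smul_mem _ hxL
      calc (t : ℕ) + 1 ≤ i := t.2
        _ ≤ Module.finrank ℝ (Submodule.span ℝ ((L : Set (Fin n → ℝ)) ∩ intLattice n)) := hLlat
        _ = Module.finrank ℝ (Submodule.span ℝ s) := by rw [hspan]
        _ ≤ _ := Submodule.finrank_mono (Submodule.span_mono hssub)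
    -- extract λ' < c in the admissible set
    obtain ⟨l', hl'mem, hl'c⟩ := exists_lt_of_csInf_lt hTne hcon
    obtain ⟨hl'0, hl'rank⟩ := hl'mem
    -- define r
    set F := (Finset.range ((k : ℕ) + 2)).filter (fun m => succMinima K m < c) with hF
    have hFne : F.Nonempty := by
      refine ⟨0, ?_⟩
      rw [hF, Finset.mem_filter]
      exact ⟨Finset.mem_range.mpr (by omega), by rw [aux_succMinima_zero]; exact hc0⟩
    set r := F.max' hFne with hr
    have hrF : r ∈ F := F.max'_mem hFne
    have hrlt : succMinima K r < c := (Finset.mem_filter.mp hrF).2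
    have hrle : r ≤ (k : ℕ) := by
      have h1 : r < (k : ℕ) + 2 := Finset.mem_range.mp (Finset.mem_filter.mp hrF).1
      have h2 : r ≠ (k : ℕ) + 1 := by
        intro h
        rw [h] at hrlt
        exact lt_irrefl _ (hc ▸ hrlt)
      omega
    have hrn : r < n := lt_of_le_of_lt hrle k.2
    have hr1 : c ≤ succMinima K (r + 1) := by
      by_contra hcon2
      push_neg at hcon2
      have : r + 1 ∈ F := by
        rw [hF, Finset.mem_filter]
        exact ⟨Finset.mem_range.mpr (by omega), hcon2⟩
      have := F.le_max' _ this
      omega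
    -- define ν
    set ν := max l' (succMinima K r) with hν
    have hν0 : 0 < ν := lt_of_lt_of_le hl'0 (le_max_left _ _)
    have hνc : ν < c := max_lt hl'c hrlt
    -- rank of lattice points in ν • K is at most r
    set V := Submodule.span ℝ ((ν • K) ∩ intLattice n) with hV
    have hVrank : Module.finrank ℝ V ≤ r := by
      by_contra hcon2
      push_neg at hcon2
      have hmem : ν ∈ {l : ℝ | 0 < l ∧
          r + 1 ≤ Module.finrank ℝ (Submodule.span ℝ ((l • K) ∩ intLattice n))} :=
        ⟨hν0, hcon2⟩
      have : succMinima K (r + 1) ≤ ν :=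
        csInf_le ⟨0, fun x hx => le_of_lt hx.1⟩ hmem
      linarith
    -- the index sets
    set A : Finset (Fin n) := Finset.univ.filter (fun j : Fin n => (j : ℕ) < r) with hA
    have hAcard : A.card = r := by
      have : A = Finset.Iio (⟨r, hrn⟩ : Fin n) := by
        ext x
        simp [hA, Finset.mem_Iio, Fin.lt_def]
      rw [this, Fin.card_Iio]
    set A1 : Finset (Fin n) := A.filter (fun j => j ∈ J) with hA1
    set A2 : Finset (Fin n) := A.filter (fun j => j ∉ J) with hA2
    have hA12 : A1.card + A2.card = r := by
      rw [hA1, hA2, Finset.card_filter_add_card_filter_not, hAcard]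
    have hA2le : A2.card ≤ (t : ℕ) := by
      have hsub2 : A2 ⊆ C.filter (fun x => x < k) := by
        intro j hj
        rw [hA2, Finset.mem_filter, hA, Finset.mem_filter] at hj
        rw [Finset.mem_filter]
        refine ⟨?_, ?_⟩
        · rw [hC, Finset.mem_sdiff]
          exact ⟨Finset.mem_univ _, hj.2⟩
        · rw [Fin.lt_def]
          exact lt_of_lt_of_le hj.1.2 hrle
      calc A2.card ≤ (C.filter (fun x => x < k)).card := Finset.card_le_card hsub2
        _ = (t : ℕ) := hcount t
    -- the subspaces
    set W1 := Submodule.span ℝ (a '' (A1 : Set (Fin n))) with hW1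
    set B := Submodule.span ℝ
      ((l' • (K ∩ (L : Set (Fin n → ℝ)))) ∩ ((L : Set (Fin n → ℝ)) ∩ intLattice n)) with hB
    have hW1rank : Module.finrank ℝ W1 = A1.card := by
      have hinj : Function.Injective (fun x : {x // x ∈ A1} => a x.val) := by
        intro x y hxy
        exact Subtype.coe_injective (ha_li.injective hxy)
      have hli : LinearIndependent ℝ (fun x : {x // x ∈ A1} => a x.val) :=
        ha_li.comp (fun x : {x // x ∈ A1} => x.val) Subtype.coe_injective
      have hrange : Set.range (fun x : {x // x ∈ A1} => a x.val) = a '' (A1 : Set (Fin n)) := by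
        ext y
        simp [Set.mem_image]
      rw [hW1, ← hrange, finrank_span_eq_card hli, Fintype.card_coe]
    have hBrank : (t : ℕ) + 1 ≤ Module.finrank ℝ B := hl'rank
    have hBL : B ≤ L := by
      rw [hB, Submodule.span_le]
      intro x hx
      exact hx.2.1
    have hW1B : W1 ⊓ B = ⊥ := by
      have h1 : W1 ⊓ B ≤ Submodule.span ℝ (a '' (J : Set (Fin n))) ⊓ L := by
        apply inf_le_inf
        · apply Submodule.span_mono
          apply Set.image_mono
          intro x hx
          exact (Finset.mem_filter.mp hx).2
        · exact hBL
      rw [hdisj] at h1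
      exact le_bot_iff.mp h1
    -- W1 ⊔ B ≤ V
    have hWV : W1 ≤ V := by
      rw [hW1, Submodule.span_le]
      rintro x ⟨j, hj, rfl⟩
      apply Submodule.subset_span
      have hjr : (j : ℕ) < r := by
        have := Finset.mem_filter.mp hj
        exact (Finset.mem_filter.mp this.1).2
      constructor
      · have h1 : succMinima K ((j : ℕ) + 1) ≤ succMinima K r :=
          aux_mono h0int (by omega) (by omega)
        have h2 : succMinima K r ≤ ν := le_max_right _ _
        exact aux_smul_subset hconv h0K (aux_succMinima_nonneg K _) (h1.trans h2) (ha_mem j)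
      · exact ha_lat j
    have hBV : B ≤ V := by
      rw [hB, Submodule.span_le]
      intro x hx
      apply Submodule.subset_span
      constructor
      · have h1 : x ∈ l' • K := Set.smul_set_mono Set.inter_subset_left hx.1
        exact aux_smul_subset hconv h0K (le_of_lt hl'0) (le_max_left _ _) h1
      · exact hx.2.2
    have hsupV : W1 ⊔ B ≤ V := sup_le hWV hBV
    -- dimension count
    have hsum : Module.finrank ℝ (W1 ⊔ B : Submodule ℝ (Fin n → ℝ)) =
        Module.finrank ℝ W1 + Module.finrank ℝ B := by
      have := Submodule.finrank_sup_add_finrank_inf_eq W1 B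
      rw [hW1B] at this
      simp only [finrank_bot] at this
      omega
    have hfinal : A1.card + ((t : ℕ) + 1) ≤ r := by
      calc A1.card + ((t : ℕ) + 1) ≤ Module.finrank ℝ W1 + Module.finrank ℝ B := by
            rw [hW1rank]; omega
        _ = Module.finrank ℝ (W1 ⊔ B : Submodule ℝ (Fin n → ℝ)) := hsum.symm
        _ ≤ Module.finrank ℝ V := Submodule.finrank_mono hsupV
        _ ≤ r := hVrank
    omega
  -- assemble the product inequality
  rw [ge_iff_le]
  have hRHS : ∏ k ∈ Finset.univ \ J, succMinima K ((k : ℕ) + 1) =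
      ∏ t : Fin i, succMinima K (((e t : Fin n) : ℕ) + 1) := by
    rw [← hC]
    symm
    apply Finset.prod_bij (fun (t : Fin i) _ => ((e t : Fin n)))
    · intro t _
      exact (e t).2
    · intro t₁ _ t₂ _ h
      exact e.injective (Subtype.coe_injective h)
    · intro x hx
      exact ⟨e.symm ⟨x, hx⟩, Finset.mem_univ _, by simp⟩
    · intro t _
      rfl
  have hLHS : ∏ j ∈ Finset.Icc 1 i,
      succMinimaIn (K ∩ (L : Set (Fin n → ℝ))) ((L : Set (Fin n → ℝ)) ∩ intLattice n) j =
      ∏ t : Fin i, succMinimaIn (K ∩ (L : Set (Fin n → ℝ)))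
        ((L : Set (Fin n → ℝ)) ∩ intLattice n) ((t : ℕ) + 1) := by
    symm
    apply Finset.prod_bij (fun (t : Fin i) _ => (t : ℕ) + 1)
    · intro t _
      rw [Finset.mem_Icc]
      have := t.2
      omega
    · intro t₁ _ t₂ _ h
      exact Fin.ext (by omega)
    · intro x hx
      rw [Finset.mem_Icc] at hx
      exact ⟨⟨x - 1, by omega⟩, Finset.mem_univ _, by simp; omega⟩
    · intro t _
      rfl
  rw [hRHS, hLHS]
  apply Finset.prod_le_prod
  · intro t _
    exact aux_succMinima_nonneg K _
  · intro t _
    exact key t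
end

section
/- Let P ⊂ ℝ^n be an n-dimensional lattice-face polytope with 0 a vertex of P, and let SP = conv(P ∪ (−P)). Then for all 1 ≤ j ≤ i ≤ n: λ_j(π^{(n−i)}(SP), ℤ^i) ≥ λ_j(SP, ℤ^n). -/
open Finset Pointwise MeasureTheory

/-- The projection `π^{(n−i)} : ℝⁿ → ℝⁱ` that forgets the last `n − i` coordinates. -/
def projMap (n i : ℕ) (h : i ≤ n) (x : Fin n → ℝ) : Fin i → ℝ :=
  fun j => x (Fin.castLE h j)

/-- `P` is a lattice-face polytope: for every `0 ≤ k ≤ n−1` and every nonempty subset `U`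
of the vertex set of `P` spanning a `k`-dimensional affine space,
`π^{(n−k)}(aff(U) ∩ ℤⁿ) = ℤᵏ`. -/
def IsLatticeFace (n : ℕ) (P : Set (Fin n → ℝ)) : Prop :=
  ∀ k : ℕ, ∀ hk : k < n, ∀ U : Set (Fin n → ℝ),
    U ⊆ Set.extremePoints ℝ P → U.Nonempty →
    Module.finrank ℝ (affineSpan ℝ U).direction = k →
    projMap n k hk.le '' ((affineSpan ℝ U : Set (Fin n → ℝ)) ∩ intLattice n) = intLattice k

/-!
Every lattice point `y ≠ 0` of `l • π(SP)` lifts to a lattice point of `l • SP`. Rescale `y` to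
the boundary point `t⁻¹ • y` of `π(SP)` (with `t ≤ l` its gauge) and take a supporting hyperplane
there: by Carathéodory inside that face, `t⁻¹ • y` is a convex combination of at most `i` points
`π w` with `w ∈ ±vert P`. The lift `x = t • ∑ λ_w w` lies in `l • SP` and in the span `M` of these
`w`, of dimension `k ≤ i < n`. The lattice-face property for `{0} ∪ (±w ∩ vert P)` says that the
projection to the first `k` coordinates maps `M ∩ ℤⁿ` onto `ℤᵏ`; being then a bijection on `M`,
it forces `x ∈ ℤⁿ`, since the first `k` coordinates of `x` are those of `y`.
So the lattice points of `l • π(SP)` span no more dimensions than those of `l • SP`.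
-/

open Module Set Topology Submodule

universe u

section ZeroMem

variable {k V : Type*} [Ring k] [AddCommGroup V] [Module k V] {s : Set V}

lemma vectorSpan_eq_span_of_zero_mem (h0 : (0 : V) ∈ s) : vectorSpan k s = span k s := by
  simpa using vectorSpan_eq_span_vsub_set_right k h0

lemma coe_affineSpan_eq_span_of_zero_mem (h0 : (0 : V) ∈ s) :
    (affineSpan k s : Set V) = span k s := by
  rw [← AffineSubspace.direction_eq_self_iff_zero_mem.2 (subset_affineSpan k s h0),
    direction_affineSpan, vectorSpan_eq_span_of_zero_mem h0]
  rfl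

end ZeroMem

theorem exists_card_le_finrank_of_mem_convexHull_of_le {V : Type u} [AddCommGroup V]
    [Module ℝ V] [FiniteDimensional ℝ V] {S : Set V} {q : V} (hq : q ∈ convexHull ℝ S)
    {f : Module.Dual ℝ V} (hf : f ≠ 0) (hS : ∀ s ∈ S, f s ≤ f q) :
    ∃ (ι : Type u) (_ : Fintype ι) (z : ι → V), range z ⊆ S ∧
      Fintype.card ι ≤ finrank ℝ V ∧ q ∈ convexHull ℝ (range z) := by
  obtain ⟨ι, _, z, w, hzS, hz, hw, hw1, rfl⟩ := eq_pos_convex_span_of_mem_convexHull hq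
  refine ⟨ι, inferInstance, z, hzS, ?_,
    (convex_convexHull ℝ _).sum_mem (fun a _ => (hw a).le) hw1
      fun a _ => subset_convexHull ℝ _ ⟨a, rfl⟩⟩
  set q := ∑ a, w a • z a
  -- positive weights force every `z a` onto the supporting hyperplane `f = f q`
  have hface : ∀ a, f (z a) = f q := by
    have hsum : ∑ a, w a * (f q - f (z a)) = 0 := by
      simp [q, mul_sub, Finset.sum_sub_distrib, ← Finset.sum_mul, hw1, map_sum]
    intro a
    have ha := (Finset.sum_eq_zero_iff_of_nonneg fun b _ =>
      mul_nonneg (hw b).le (sub_nonneg.2 (hS _ (hzS ⟨b, rfl⟩)))).1 hsum a (Finset.mem_univ a)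
    linarith [sub_eq_zero.1 ((mul_eq_zero.1 ha).resolve_left (hw a).ne')]
  have hker : vectorSpan ℝ (range z) ≤ LinearMap.ker f := by
    rw [vectorSpan_def, span_le]
    rintro _ ⟨_, ⟨a, rfl⟩, _, ⟨b, rfl⟩, rfl⟩
    simp [hface]
  calc Fintype.card ι ≤ finrank ℝ (vectorSpan ℝ (range z)) + 1 := hz.card_le_finrank_succ
    _ ≤ finrank ℝ (LinearMap.ker f) + 1 := by gcongr; exact Submodule.finrank_mono hker
    _ = finrank ℝ V := Module.Dual.finrank_ker_add_one_of_ne_zero hf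

theorem exists_pos_le_inv_smul_mem_frontier {V : Type*} [NormedAddCommGroup V]
    [NormedSpace ℝ V] {K : Set V} (hKc : Convex ℝ K) (hK0 : K ∈ 𝓝 0)
    (hKb : Bornology.IsBounded K) {l : ℝ} (hl : 0 ≤ l) {y : V} (hy : y ∈ l • K) (hy0 : y ≠ 0) :
    ∃ t, 0 < t ∧ t ≤ l ∧ t⁻¹ • y ∈ frontier K := by
  have ht : 0 < gauge K y :=
    (gauge_pos (absorbent_nhds_zero hK0) ((NormedSpace.isVonNBounded_iff ℝ).2 hKb)).2 hy0
  refine ⟨gauge K y, ht, gauge_le_of_mem hl hy, ?_⟩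
  rw [← gauge_eq_one_iff_mem_frontier hKc hK0, gauge_smul_of_nonneg (inv_nonneg.2 ht.le),
    smul_eq_mul, inv_mul_cancel₀ ht.ne']

theorem exists_card_le_finrank_of_mem_convexHull_of_notMem_interior {V : Type u}
    [NormedAddCommGroup V] [NormedSpace ℝ V] [FiniteDimensional ℝ V] {S : Set V}
    (hS : (interior (convexHull ℝ S)).Nonempty) {q : V} (hq : q ∈ convexHull ℝ S)
    (hqS : q ∉ interior (convexHull ℝ S)) :
    ∃ (ι : Type u) (_ : Fintype ι) (z : ι → V), range z ⊆ S ∧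
      Fintype.card ι ≤ finrank ℝ V ∧ q ∈ convexHull ℝ (range z) := by
  obtain ⟨f, hf0, hf⟩ :=
    geometric_hahn_banach_of_nonempty_interior_point (convex_convexHull ℝ S) hqS hS
  refine exists_card_le_finrank_of_mem_convexHull_of_le hq (f := (f : V →ₗ[ℝ] ℝ)) ?_
    fun s hs => hf s (subset_convexHull ℝ S hs)
  exact fun h => hf0 (ContinuousLinearMap.coe_injective (by simpa using h))

theorem Convex.zero_mem_interior_of_neg_eq {V : Type*} [NormedAddCommGroup V] [NormedSpace ℝ V]
    {K : Set V} (hK : Convex ℝ K) (hneg : -K = K) (hint : (interior K).Nonempty) :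
    (0 : V) ∈ interior K := by
  obtain ⟨x, hx⟩ := hint
  have hnx : -x ∈ interior K := interior_maximal
    ((neg_subset_neg.2 interior_subset).trans hneg.subset) isOpen_interior.neg (neg_mem_neg.2 hx)
  simpa using hK.interior hx hnx (a := 1 / 2) (b := 1 / 2) (by norm_num) (by norm_num) (by norm_num)

theorem convexHull_union_neg_mem_nhds_zero {V : Type*} [NormedAddCommGroup V] [NormedSpace ℝ V]
    [FiniteDimensional ℝ V] {P : Set V} (hP : affineSpan ℝ P = ⊤) :
    convexHull ℝ (P ∪ -P) ∈ 𝓝 0 := by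
  refine mem_interior_iff_mem_nhds.1 <| (convex_convexHull ℝ _).zero_mem_interior_of_neg_eq ?_ ?_
  · rw [← convexHull_neg, union_neg, neg_neg, union_comm]
  · refine (convex_convexHull ℝ _).interior_nonempty_iff_affineSpan_eq_top.2 (eq_top_iff.2 ?_)
    exact hP.ge.trans (affineSpan_mono ℝ (subset_union_left.trans (subset_convexHull ℝ _)))

theorem Set.Finite.convexHull_extremePoints_convexHull {V : Type*} [NormedAddCommGroup V]
    [NormedSpace ℝ V] {s : Set V} (hs : s.Finite) :
    convexHull ℝ (extremePoints ℝ (convexHull ℝ s)) = convexHull ℝ s := by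
  have hfin : (extremePoints ℝ (convexHull ℝ s)).Finite :=
    hs.subset extremePoints_convexHull_subset
  simpa [(hfin.isCompact_convexHull (𝕜 := ℝ)).isClosed.closure_eq] using
    closure_convexHull_extremePoints (hs.isCompact_convexHull (𝕜 := ℝ)) (convex_convexHull ℝ s)

def projLinear (n i : ℕ) (h : i ≤ n) : (Fin n → ℝ) →ₗ[ℝ] Fin i → ℝ :=
  LinearMap.funLeft ℝ ℝ (Fin.castLE h)

@[simp] lemma coe_projLinear {n i : ℕ} (h : i ≤ n) : ⇑(projLinear n i h) = projMap n i h := rfl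

lemma projLinear_surjective {n i : ℕ} (h : i ≤ n) : Function.Surjective (projLinear n i h) :=
  LinearMap.funLeft_surjective_of_injective _ _ _ (Fin.castLE_injective h)

lemma projMap_self {n : ℕ} (h : n ≤ n) : projMap n n h = id := rfl

lemma projMap_projMap {n i k : ℕ} (hki : k ≤ i) (hin : i ≤ n) (x : Fin n → ℝ) :
    projMap i k hki (projMap n i hin x) = projMap n k (hki.trans hin) x := rfl

lemma projMap_mem_intLattice {n k : ℕ} (h : k ≤ n) {x : Fin n → ℝ} (hx : x ∈ intLattice n) :
    projMap n k h x ∈ intLattice k := fun _ => hx _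

lemma single_mem_intLattice {m : ℕ} (b : Fin m) : Pi.single b (1 : ℝ) ∈ intLattice m := by
  intro j
  by_cases h : j = b
  · exact ⟨1, by simp [h]⟩
  · exact ⟨0, by simp [h]⟩

lemma span_eq_top_of_forall_single_mem {m : ℕ} {s : Set (Fin m → ℝ)}
    (hs : ∀ b, Pi.single b (1 : ℝ) ∈ s) : span ℝ s = ⊤ :=
  eq_top_iff.2 <| (Pi.basisFun ℝ (Fin m)).span_eq.ge.trans <|
    span_mono <| range_subset_iff.2 fun b => by simpa using hs b

theorem mem_intLattice_of_projMap_mem {n k : ℕ} (hk : k ≤ n) {M : Submodule ℝ (Fin n → ℝ)}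
    (hM : finrank ℝ M = k) (hproj : projMap n k hk '' (M ∩ intLattice n) = intLattice k)
    {x : Fin n → ℝ} (hx : x ∈ M) (hxk : projMap n k hk x ∈ intLattice k) :
    x ∈ intLattice n := by
  set φ := (projLinear n k hk).comp M.subtype
  have hφ : Function.Surjective φ := by
    rw [← LinearMap.range_eq_top, eq_top_iff,
      ← span_eq_top_of_forall_single_mem (s := intLattice k) single_mem_intLattice, span_le,
      ← hproj]
    rintro _ ⟨z, ⟨hzM, -⟩, rfl⟩
    exact ⟨⟨z, hzM⟩, rfl⟩
  have hφinj : Function.Injective φ :=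
    (LinearMap.injective_iff_surjective_of_finrank_eq_finrank (by simp [hM])).2 hφ
  rw [← hproj] at hxk
  obtain ⟨z, ⟨hzM, hzZ⟩, hφzx⟩ := hxk
  have hzx : z = x := congrArg Subtype.val (hφinj (a₁ := ⟨z, hzM⟩) (a₂ := ⟨x, hx⟩) hφzx)
  exact hzx ▸ hzZ

theorem exists_pos_span_smul_inter_intLattice_eq_top {m : ℕ} {K : Set (Fin m → ℝ)}
    (hK : K ∈ 𝓝 0) : ∃ l : ℝ, 0 < l ∧ span ℝ (l • K ∩ intLattice m) = ⊤ := by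
  obtain ⟨r, hr, hrK⟩ := ((absorbent_nhds_zero (𝕜 := ℝ) hK).absorbs_finite
    (finite_range fun b : Fin m => Pi.single b (1 : ℝ))).exists_pos
  refine ⟨r, hr, span_eq_top_of_forall_single_mem fun b => ⟨?_, single_mem_intLattice b⟩⟩
  exact hrK r (by rw [Real.norm_of_nonneg hr.le]) ⟨b, rfl⟩

theorem succMinima_le_of_subset_image {m n j : ℕ} {A : Set (Fin m → ℝ)} {B : Set (Fin n → ℝ)}
    (g : (Fin n → ℝ) →ₗ[ℝ] Fin m → ℝ)
    (hA : ∃ l : ℝ, 0 < l ∧ j ≤ finrank ℝ (span ℝ (l • A ∩ intLattice m)))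
    (hAB : ∀ l : ℝ, 0 < l → l • A ∩ intLattice m ⊆ g '' (l • B ∩ intLattice n)) :
    succMinima B j ≤ succMinima A j := by
  obtain ⟨l₀, hl₀⟩ := hA
  refine csInf_le_csInf ⟨0, fun l hl => hl.1.le⟩ ⟨l₀, hl₀⟩ fun l ⟨hl, hj⟩ => ⟨hl, hj.trans ?_⟩
  calc finrank ℝ (span ℝ (l • A ∩ intLattice m))
      ≤ finrank ℝ (span ℝ (g '' (l • B ∩ intLattice n))) :=
        Submodule.finrank_mono (span_mono (hAB l hl))
    _ = finrank ℝ ((span ℝ (l • B ∩ intLattice n)).map g) := by rw [span_image]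
    _ ≤ finrank ℝ (span ℝ (l • B ∩ intLattice n)) := Submodule.finrank_map_le g _

theorem IsLatticeFace.mem_intLattice_of_mem_span {n k : ℕ} {P T : Set (Fin n → ℝ)}
    (hlf : IsLatticeFace n P) (h0 : (0 : Fin n → ℝ) ∈ extremePoints ℝ P)
    (hT : T ⊆ extremePoints ℝ P ∪ -extremePoints ℝ P) (hTk : finrank ℝ (span ℝ T) = k)
    (hk : k < n) {x : Fin n → ℝ} (hx : x ∈ span ℝ T) (hxk : projMap n k hk.le x ∈ intLattice k) :
    x ∈ intLattice n := by
  set U := insert 0 (extremePoints ℝ P ∩ (T ∪ -T))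
  have h0U : (0 : Fin n → ℝ) ∈ U := mem_insert _ _
  have hU : span ℝ U = span ℝ T := by
    rw [span_insert_zero]
    apply le_antisymm <;> rw [span_le]
    · rintro v ⟨-, hv | hv⟩
      · exact subset_span hv
      · simpa using neg_mem (subset_span (R := ℝ) (mem_neg.1 hv))
    · intro t ht
      rcases hT ht with htE | htE
      · exact subset_span ⟨htE, Or.inl ht⟩
      · simpa using neg_mem (subset_span (R := ℝ) (s := extremePoints ℝ P ∩ (T ∪ -T))
          ⟨htE, Or.inr (by simpa using ht)⟩)
  refine mem_intLattice_of_projMap_mem hk.le hTk ?_ hx hxk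
  rw [← hU, ← coe_affineSpan_eq_span_of_zero_mem h0U]
  refine hlf k hk U ?_ ⟨0, h0U⟩ ?_
  · rintro _ (rfl | ⟨hv, -⟩)
    exacts [h0, hv]
  · rw [direction_affineSpan, vectorSpan_eq_span_of_zero_mem h0U, hU, hTk]

theorem IsLatticeFace.exists_lift_mem_intLattice {n i : ℕ} (hin : i < n)
    {P E : Set (Fin n → ℝ)} (hlf : IsLatticeFace n P) (hE : E ⊆ extremePoints ℝ P)
    (hEfin : E.Finite) (h0 : (0 : Fin n → ℝ) ∈ E)
    (hK0 : projMap n i hin.le '' convexHull ℝ (E ∪ -E) ∈ 𝓝 0) {l : ℝ} (hl : 0 < l)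
    {y : Fin i → ℝ} (hy : y ∈ l • projMap n i hin.le '' convexHull ℝ (E ∪ -E))
    (hyZ : y ∈ intLattice i) :
    ∃ x ∈ l • convexHull ℝ (E ∪ -E) ∩ intLattice n, projMap n i hin.le x = y := by
  rw [← coe_projLinear] at hK0 hy ⊢
  set SP := convexHull ℝ (E ∪ -E)
  set π := projLinear n i hin.le
  have hKS : π '' SP = convexHull ℝ (π '' (E ∪ -E)) := π.image_convexHull _
  have hK : IsCompact (π '' SP) :=
    hKS ▸ ((hEfin.union hEfin.neg).image π).isCompact_convexHull (𝕜 := ℝ)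
  have h0SP : (0 : Fin n → ℝ) ∈ SP := subset_convexHull ℝ _ (Or.inl h0)
  rcases eq_or_ne y 0 with rfl | hy0
  · exact ⟨0, ⟨zero_mem_smul_set h0SP, fun _ => ⟨0, by simp⟩⟩, map_zero π⟩
  obtain ⟨t, ht0, htl, hq⟩ := exists_pos_le_inv_smul_mem_frontier
    (hKS ▸ convex_convexHull ℝ _) hK0 hK.isBounded hl.le hy hy0
  rw [hKS] at hq hK
  obtain ⟨ι, _, z, hzS, hcard, hqz⟩ := exists_card_le_finrank_of_mem_convexHull_of_notMem_interior
    ⟨0, mem_interior_iff_mem_nhds.2 (hKS ▸ hK0)⟩ (hK.isClosed.frontier_subset hq) hq.2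
  choose W hWE hWz using fun a => hzS ⟨a, rfl⟩
  have hzW : Set.range z = π '' Set.range W := by
    rw [← range_comp]
    exact congrArg Set.range (funext hWz).symm
  rw [hzW, ← π.image_convexHull] at hqz
  obtain ⟨x, hx, hxq⟩ := hqz
  have hxy : π (t • x) = y := by rw [map_smul, hxq, smul_inv_smul₀ ht0.ne']
  refine ⟨t • x, ⟨?_, ?_⟩, hxy⟩
  · have hxSP : x ∈ SP := convexHull_mono (range_subset_iff.2 hWE) hx
    refine ⟨(t / l) • x, ((convex_convexHull ℝ _).starConvex h0SP).smul_mem hxSP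
      (by positivity) (div_le_one_of_le₀ htl hl.le), ?_⟩
    simp only [smul_smul, mul_div_cancel₀ t hl.ne']
  · have hrank : finrank ℝ (span ℝ (range W)) ≤ i :=
      (finrank_range_le_card (R := ℝ) W).trans (hcard.trans_eq (finrank_fin_fun ℝ))
    have hWE' : range W ⊆ extremePoints ℝ P ∪ -extremePoints ℝ P :=
      (range_subset_iff.2 hWE).trans (union_subset_union hE (neg_subset_neg.2 hE))
    refine hlf.mem_intLattice_of_mem_span (hE h0) hWE' rfl (hrank.trans_lt hin)
      (smul_mem _ _ (convexHull_min subset_span (span ℝ (range W)).convex hx)) ?_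
    rw [← projMap_projMap hrank hin.le]
    exact projMap_mem_intLattice hrank (by rwa [← coe_projLinear, hxy])

theorem stmt14_general (n : ℕ) (P : Set (Fin n → ℝ))
    (hpoly : ∃ V : Finset (Fin n → ℝ), P = convexHull ℝ (V : Set (Fin n → ℝ)))
    (hdim : affineSpan ℝ P = ⊤)
    (h0 : (0 : Fin n → ℝ) ∈ Set.extremePoints ℝ P)
    (hlf : IsLatticeFace n P)
    (SP : Set (Fin n → ℝ)) (hSP : SP = convexHull ℝ (P ∪ -P))
    (i j : ℕ) (hji : j ≤ i) (hi : i ≤ n) :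
    succMinima (projMap n i hi '' SP) j ≥ succMinima SP j := by
  rcases hi.eq_or_lt with rfl | hin
  · rw [projMap_self, image_id]
  obtain ⟨V, rfl⟩ := hpoly
  set E := extremePoints ℝ (convexHull ℝ (V : Set (Fin n → ℝ)))
  have hEfin : E.Finite := V.finite_toSet.subset extremePoints_convexHull_subset
  have hSPE : SP = convexHull ℝ (E ∪ -E) := by
    rw [hSP, ← convexHull_convexHull_union_left E, ← convexHull_convexHull_union_right _ (-E),
      convexHull_neg, V.finite_toSet.convexHull_extremePoints_convexHull]
  have hK0 : projMap n i hi '' SP ∈ 𝓝 0 := by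
    rw [← coe_projLinear, ← map_zero (projLinear n i hi)]
    exact (LinearMap.isOpenMap_of_finiteDimensional _ (projLinear_surjective hi)).image_mem_nhds
      (hSP ▸ convexHull_union_neg_mem_nhds_zero hdim)
  refine succMinima_le_of_subset_image (projLinear n i hi) ?_ fun l hl y ⟨hy, hyZ⟩ => ?_
  · obtain ⟨l, hl, htop⟩ := exists_pos_span_smul_inter_intLattice_eq_top hK0
    exact ⟨l, hl, by rwa [htop, finrank_top, finrank_fin_fun]⟩
  · rw [hSPE] at hK0 hy ⊢
    exact hlf.exists_lift_mem_intLattice hin subset_rfl hEfin h0 hK0 hl hy hyZ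

/-- Lemma: if `P ⊆ ℝⁿ` is an `n`-dimensional lattice-face polytope with `0` a vertex of `P`,
and `SP = conv(P ∪ (−P))`, then for all `1 ≤ j ≤ i ≤ n` one has
`λ_j(π^{(n−i)}(SP), ℤⁱ) ≥ λ_j(SP, ℤⁿ)`. -/
theorem stmt14 (n : ℕ) (hn : 1 ≤ n) (P : Set (Fin n → ℝ))
    (hpoly : ∃ V : Finset (Fin n → ℝ), P = convexHull ℝ (V : Set (Fin n → ℝ)))
    (hdim : affineSpan ℝ P = ⊤)
    (h0 : (0 : Fin n → ℝ) ∈ Set.extremePoints ℝ P)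
    (hlf : IsLatticeFace n P)
    (SP : Set (Fin n → ℝ)) (hSP : SP = convexHull ℝ (P ∪ -P))
    (i j : ℕ) (hj : 1 ≤ j) (hji : j ≤ i) (hi : i ≤ n) :
    succMinima (projMap n i hi '' SP) j ≥ succMinima SP j :=
  stmt14_general n P hpoly hdim h0 hlf SP hSP i j hji hi
end

section
/- For l ∈ ℕ let Q^n_l = conv( (l·[−1,1]^{n−1} × {0}) ∪ {e_n, −e_n} ) ⊂ ℝ^n, where e_n is the n-th standard unit vector. For n ≥ 3 and any constant c > 0 there exists l ∈ ℕ such that g_{n−2}(Q^n_l) > c · σ_{n−2}(Q^n_l). -/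
/-!
The lattice points of `k • Q^n_l` are counted slice by slice along the last coordinate: the
slice at height `t ∈ [-k, k]` is a cube with `(2l(k - |t|) + 1)^(n-1)` lattice points. Summing
these with Faulhaber's formula gives `g_{n-2}(Q^n_l) = (n-1)((2l)^(n-1)/6 + (2l)^(n-3))`, which
grows like `l^(n-1)`. On the other hand `DQ^n_l` lies in the sup-norm ball of radius `2l`, so a
dilate `λ DQ^n_l` with `λ < 1/(2l)` contains no nonzero lattice point; hence `1/λ_i(DQ^n_l) ≤ 2l`
and `σ_{n-2}(Q^n_l) ≤ C(n, 2) (2l)^(n-2)`, which grows only like `l^(n-2)`.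
-/

open Finset Pointwise MeasureTheory

/-- The slab `l·[−1,1]^{n−1} × {0} ⊆ ℝⁿ`: the cube of side `2l` in the first `n−1`
coordinates, with last coordinate `0`. -/
def cubeSlice (n l : ℕ) : Set (Fin n → ℝ) :=
  {x | ∀ j : Fin n, ((j : ℕ) < n - 1 → |x j| ≤ (l : ℝ)) ∧ ((j : ℕ) = n - 1 → x j = 0)}

/-- The `n`-th standard unit vector of `ℝⁿ` (i.e. the last coordinate vector). -/
def lastUnitVec (n : ℕ) : Fin n → ℝ := fun j => if (j : ℕ) = n - 1 then 1 else 0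

/-- The bipyramid `Q^n_l = conv( (l·[−1,1]^{n−1} × {0}) ∪ {e_n, −e_n} )`. -/
def Qnl (n l : ℕ) : Set (Fin n → ℝ) :=
  convexHull ℝ (cubeSlice n l ∪ {lastUnitVec n, -lastUnitVec n})

open Polynomial

theorem abs_mul_add_mul_le {a b u v : ℝ} (ha : 0 ≤ a) (hb : 0 ≤ b) :
    |a * u + b * v| ≤ a * |u| + b * |v| := by
  simpa [abs_mul, abs_of_nonneg ha, abs_of_nonneg hb] using abs_add_le (a * u) (b * v)

theorem mem_Qnl_of_abs_le {m l : ℕ} {x : Fin (m + 1) → ℝ} (hxN : |x (Fin.last m)| ≤ 1)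
    (hx : ∀ i : Fin m, |x i.castSucc| ≤ l * (1 - |x (Fin.last m)|)) : x ∈ Qnl (m + 1) l := by
  set t := x (Fin.last m)
  -- `x` is a convex combination of a point of the cube and the apex on the side of `t`
  set y : Fin (m + 1) → ℝ := Fin.snoc (fun i => x i.castSucc / (1 - |t|)) 0
  set e : Fin (m + 1) → ℝ := if 0 ≤ t then lastUnitVec (m + 1) else -lastUnitVec (m + 1)
  have hx0 : ∀ i : Fin m, 1 - |t| = 0 → x i.castSucc = 0 := fun i ht =>
    abs_nonpos_iff.mp (by simpa [ht] using hx i)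
  have hy : y ∈ cubeSlice (m + 1) l := by
    refine Fin.lastCases (by simp [y]) (fun i => ?_)
    simp only [y, Fin.snoc_castSucc, Fin.val_castSucc, add_tsub_cancel_right, i.isLt, i.isLt.ne,
      true_implies, false_implies, and_true, abs_div]
    rcases eq_or_lt_of_le (sub_nonneg.mpr hxN) with h | h
    · simp [← h]
    · rw [abs_of_pos h, div_le_iff₀ h]; exact hx i
  have he : e ∈ ({lastUnitVec (m + 1), -lastUnitVec (m + 1)} : Set _) := by
    unfold e; split_ifs <;> simp
  have hxe : x = (1 - |t|) • y + |t| • e := by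
    refine funext (Fin.lastCases ?_ (fun i => ?_))
    · unfold e
      split_ifs with h <;> simp [y, lastUnitVec, abs_of_nonneg, abs_of_neg, h, not_le.mp, t]
    · unfold e; split_ifs <;> simp [y, lastUnitVec, i.isLt.ne, mul_div_cancel_of_imp' (hx0 i)]
  rw [hxe]
  exact segment_subset_convexHull (Set.mem_union_left _ hy) (Set.mem_union_right _ he)
    ⟨1 - |t|, |t|, by linarith, abs_nonneg t, by ring, rfl⟩

theorem Qnl_succ_eq (m l : ℕ) :
    Qnl (m + 1) l = {x : Fin (m + 1) → ℝ | |x (Fin.last m)| ≤ 1 ∧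
      ∀ i : Fin m, |x i.castSucc| ≤ l * (1 - |x (Fin.last m)|)} := by
  have hl : (0 : ℝ) ≤ l := l.cast_nonneg
  refine subset_antisymm (convexHull_min ?_ ?_) fun x ⟨hxN, hx⟩ => mem_Qnl_of_abs_le hxN hx
  · rintro y (hy | hy | hy)
    · have hlast : y (Fin.last m) = 0 := (hy (Fin.last m)).2 (by simp)
      exact ⟨by simp [hlast], fun i => by simpa [hlast] using (hy i.castSucc).1 (by simp)⟩
    all_goals subst hy; simp [lastUnitVec, Fin.val_castSucc, Fin.val_last, Fin.is_lt, ne_of_lt]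
  · rintro x ⟨hxN, hx⟩ y ⟨hyN, hy⟩ a b ha hb hab
    have key := fun j => abs_mul_add_mul_le (u := x j) (v := y j) ha hb
    simp only [Set.mem_ofPred_eq, Pi.add_apply, Pi.smul_apply, smul_eq_mul]
    refine ⟨by nlinarith [key (Fin.last m)], fun i => ?_⟩
    nlinarith [key (Fin.last m), key i.castSucc, mul_le_mul_of_nonneg_left (hx i) ha,
      mul_le_mul_of_nonneg_left (hy i) hb, mul_le_mul_of_nonneg_left (key (Fin.last m)) hl]

theorem mem_smul_Qnl_iff {m l : ℕ} {s : ℝ} (hs : 0 < s) {x : Fin (m + 1) → ℝ} :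
    x ∈ s • Qnl (m + 1) l ↔ |x (Fin.last m)| ≤ s ∧
      ∀ i : Fin m, |x i.castSucc| ≤ l * (s - |x (Fin.last m)|) := by
  have key : ∀ a : ℝ, s⁻¹ * a ≤ l * (1 - s⁻¹ * |x (Fin.last m)|) ↔
      a ≤ l * (s - |x (Fin.last m)|) := fun a => by
    rw [← mul_le_mul_iff_of_pos_left hs]
    field_simp
  rw [Set.mem_smul_set_iff_inv_smul_mem₀ hs.ne', Qnl_succ_eq]
  simp only [Set.mem_ofPred_eq, Pi.smul_apply, smul_eq_mul, abs_mul, abs_inv, abs_of_pos hs]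
  exact and_congr (by rw [inv_mul_le_iff₀ hs, mul_one]) (forall_congr' fun i => key _)

theorem norm_le_of_mem_Qnl {n l : ℕ} (hl : 1 ≤ l) {x : Fin n → ℝ} (hx : x ∈ Qnl n l) :
    ‖x‖ ≤ l := by
  have hl' : (1 : ℝ) ≤ l := by exact_mod_cast hl
  suffices Qnl n l ⊆ Metric.closedBall 0 l by simpa using this hx
  refine convexHull_min ?_ (convex_closedBall 0 _)
  have hunit : ‖lastUnitVec n‖ ≤ l := (pi_norm_le_iff_of_nonneg (by linarith)).mpr fun j => by
    unfold lastUnitVec; split_ifs <;> simp [hl']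
  rintro y (hy | hy | hy)
  · refine mem_closedBall_zero_iff.mpr ((pi_norm_le_iff_of_nonneg (by linarith)).mpr fun j => ?_)
    rcases lt_or_ge (j : ℕ) (n - 1) with hj | hj
    · exact (hy j).1 hj
    · simp [(hy j).2 (by omega)]
  all_goals subst hy; simpa using hunit

theorem eq_zero_of_mem_intLattice_of_norm_lt_one {n : ℕ} {x : Fin n → ℝ}
    (hx : x ∈ intLattice n) (hnorm : ‖x‖ < 1) : x = 0 := funext fun j => by
  obtain ⟨z, hz⟩ := hx j
  have : |(z : ℝ)| < 1 := hz ▸ (norm_le_pi_norm x j).trans_lt hnorm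
  simp [hz, Int.abs_lt_one_iff.mp (by exact_mod_cast this)]

theorem succMinima_nonneg {n : ℕ} (K : Set (Fin n → ℝ)) (i : ℕ) : 0 ≤ succMinima K i :=
  Real.sInf_nonneg fun _ h => h.1.le

theorem one_div_succMinima_le {n i : ℕ} {K : Set (Fin n → ℝ)} {R : ℝ} (hR : 0 < R)
    (hK : ∀ x ∈ K, ‖x‖ ≤ R) (hi : 1 ≤ i) : 1 / succMinima K i ≤ R := by
  unfold succMinima
  set S := {t : ℝ | 0 < t ∧
    i ≤ Module.finrank ℝ (Submodule.span ℝ ((t • K) ∩ intLattice n))}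
  -- below `R⁻¹`, the only lattice point of the dilate is `0`
  have hlow : ∀ t ∈ S, R⁻¹ ≤ t := by
    rintro t ⟨ht, hrank⟩
    by_contra! htR
    have hzero : ∀ x ∈ (t • K) ∩ intLattice n, x = 0 := by
      rintro _ ⟨⟨x, hx, rfl⟩, hint⟩
      refine eq_zero_of_mem_intLattice_of_norm_lt_one hint ?_
      calc ‖t • x‖ = t * ‖x‖ := by rw [norm_smul, Real.norm_of_nonneg ht.le]
        _ ≤ t * R := by gcongr; exact hK x hx
        _ < R⁻¹ * R := by gcongr
        _ = 1 := inv_mul_cancel₀ hR.ne'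
    rw [Submodule.span_eq_bot.mpr hzero, finrank_bot] at hrank
    omega
  rcases S.eq_empty_or_nonempty with h | h
  · simp [h, hR.le]
  · rw [one_div, inv_le_comm₀ ((inv_pos.mpr hR).trans_le (le_csInf h hlow)) hR]
    exact le_csInf h hlow

theorem sum_prod_one_div_succMinima_le {n r : ℕ} {K : Set (Fin n → ℝ)} {R : ℝ} (hR : 0 < R)
    (hK : ∀ x ∈ K, ‖x‖ ≤ R) :
    ∑ I ∈ (univ : Finset (Fin n)).powersetCard r,
        ∏ j ∈ I, 1 / succMinima K ((j : ℕ) + 1) ≤ n.choose r * R ^ r := by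
  calc ∑ I ∈ (univ : Finset (Fin n)).powersetCard r,
        ∏ j ∈ I, 1 / succMinima K ((j : ℕ) + 1)
      ≤ ∑ I ∈ (univ : Finset (Fin n)).powersetCard r, R ^ r := by
        refine sum_le_sum fun I hI => ?_
        rw [← (mem_powersetCard.mp hI).2, ← prod_const]
        exact prod_le_prod (fun j _ => one_div_nonneg.mpr (succMinima_nonneg K _))
          fun j _ => one_div_succMinima_le hR hK (by omega)
    _ = n.choose r * R ^ r := by simp

theorem sum_Icc_neg_natAbs {M : Type*} [AddCommMonoid M] (f : ℕ → M) (k : ℕ) :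
    ∑ t ∈ Icc (-(k : ℤ)) k, f t.natAbs = f 0 + 2 • ∑ i ∈ range k, f (i + 1) := by
  induction k with
  | zero => simp
  | succ k ih =>
    have hIcc : Icc (-((k + 1 : ℕ) : ℤ)) (k + 1 : ℕ) =
        insert (-(k + 1 : ℤ)) (insert (k + 1 : ℤ) (Icc (-(k : ℤ)) k)) := by
      ext; simp only [mem_Icc, mem_insert]; omega
    rw [hIcc, sum_insert (by simp only [mem_Icc, mem_insert]; omega),
      sum_insert (by simp only [mem_Icc]; omega), ih, sum_range_succ]
    have h1 : (-(k + 1 : ℤ)).natAbs = k + 1 := by omega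
    have h2 : (k + 1 : ℤ).natAbs = k + 1 := by omega
    rw [h1, h2, smul_add, two_nsmul (f (k + 1))]
    abel

theorem sum_Icc_neg_sub_natAbs {M : Type*} [AddCommMonoid M] (f : ℕ → M) (k : ℕ) :
    ∑ t ∈ Icc (-(k : ℤ)) k, f (k - t.natAbs) = f k + 2 • ∑ i ∈ range k, f i := by
  rw [sum_Icc_neg_natAbs (fun i => f (k - i)), Nat.sub_zero, ← sum_range_reflect f k]
  congr 2
  exact sum_congr rfl fun i _ => by rw [Nat.sub_sub, add_comm]

theorem intCast_snoc_mem_smul_Qnl_iff {m l k : ℕ} (hk : 1 ≤ k) (t : ℤ) (y : Fin m → ℤ) :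
    (fun j => ((Fin.snoc (α := fun _ => ℤ) y t j : ℤ) : ℝ)) ∈
        (k : ℝ) • Qnl (m + 1) l ↔
      t ∈ Icc (-(k : ℤ)) k ∧
        ∀ i, y i ∈ Icc (-((l * (k - t.natAbs) : ℕ) : ℤ)) (l * (k - t.natAbs) : ℕ) := by
  simp only [mem_smul_Qnl_iff (show (0 : ℝ) < k by exact_mod_cast hk), mem_Icc, ← abs_le,
    Fin.snoc_last, Fin.snoc_castSucc]
  rw [show |(t : ℝ)| ≤ k ↔ |t| ≤ k by norm_cast]
  refine and_congr_right fun ht => forall_congr' fun i => ?_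
  have htk : t.natAbs ≤ k := by have := abs_le.mp ht; omega
  have hM : (((l * (k - t.natAbs) : ℕ) : ℤ) : ℝ) = l * (k - |(t : ℝ)|) := by
    simp [Nat.cast_sub htk, Nat.cast_natAbs]
  rw [← hM]
  norm_cast

theorem card_smul_Qnl_inter_intLattice (m l k : ℕ) (hk : 1 ≤ k) :
    Nat.card ↥((k : ℝ) • Qnl (m + 1) l ∩ intLattice (m + 1)) =
      ∑ t ∈ Icc (-(k : ℤ)) k, (2 * l * (k - t.natAbs) + 1) ^ m := by
  set F : Finset (Σ _ : ℤ, Fin m → ℤ) := (Icc (-(k : ℤ)) k).sigma fun t =>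
    Fintype.piFinset fun _ => Icc (-((l * (k - t.natAbs) : ℕ) : ℤ)) (l * (k - t.natAbs) : ℕ)
  set ψ : (Σ _ : ℤ, Fin m → ℤ) → Fin (m + 1) → ℝ :=
    fun q j => (Fin.snocEquiv (fun _ => ℤ) (Equiv.sigmaEquivProd _ _ q) j : ℤ)
  have hψ : Function.Injective ψ :=
    (Int.cast_injective.comp_left).comp ((Fin.snocEquiv _).injective.comp (Equiv.injective _))
  have hmem : ∀ q, ψ q ∈ (k : ℝ) • Qnl (m + 1) l ↔ q ∈ F := fun ⟨t, y⟩ => by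
    simpa [ψ, F] using intCast_snoc_mem_smul_Qnl_iff hk t y
  have hlat : ∀ x, x ∈ intLattice (m + 1) ↔ ∃ q, ψ q = x := by
    refine fun x => ⟨fun hx => ?_, ?_⟩
    · choose z hz using hx
      exact ⟨⟨z (Fin.last m), Fin.init z⟩, funext fun j => by simp [ψ, hz]⟩
    · rintro ⟨q, rfl⟩ j
      exact ⟨_, rfl⟩
  have himage : (k : ℝ) • Qnl (m + 1) l ∩ intLattice (m + 1) = ψ '' F := by
    ext x
    constructor
    · rintro ⟨hx, hint⟩
      obtain ⟨q, rfl⟩ := (hlat x).mp hint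
      exact ⟨q, (hmem q).mp hx, rfl⟩
    · rintro ⟨q, hq, rfl⟩
      exact ⟨(hmem q).mpr hq, (hlat _).mpr ⟨q, rfl⟩⟩
  rw [himage, Nat.card_image_of_injective hψ, Nat.card_coe_set_eq, Set.ncard_coe_finset,
    card_sigma]
  refine sum_congr rfl fun t _ => ?_
  simp only [Fintype.card_piFinset, Int.card_Icc, prod_const, card_univ, Fintype.card_fin]
  rw [mul_assoc]
  congr 1
  omega

noncomputable def powerSumPoly (p : ℕ) : ℚ[X] :=
  C ((p + 1 : ℚ)⁻¹) * (Polynomial.bernoulli (p + 1) - C (_root_.bernoulli (p + 1)))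

theorem eval_powerSumPoly (p k : ℕ) :
    (powerSumPoly p).eval (k : ℚ) = ∑ i ∈ range k, (i : ℚ) ^ p := by
  rw [powerSumPoly, eval_mul, eval_C, eval_sub, eval_C, ← Nat.succ_eq_add_one,
    ← sum_range_pow_eq_bernoulli_sub]
  field_simp

theorem coeff_powerSumPoly (p : ℕ) {d : ℕ} (hd : d ≠ 0) : (powerSumPoly p).coeff d =
    (p + 1 : ℚ)⁻¹ *
      if d ≤ p + 1 then _root_.bernoulli (p + 1 - d) * (p + 1).choose d else 0 := by
  simp [powerSumPoly, coeff_bernoulli, coeff_C, hd]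

noncomputable def qnlEhrhartPoly (m l : ℕ) : ℚ[X] :=
  ∑ j ∈ range (m + 1), C (m.choose j * (2 * l : ℚ) ^ j) * (X ^ j + 2 * powerSumPoly j)

theorem eval_qnlEhrhartPoly (m l k : ℕ) : (qnlEhrhartPoly m l).eval (k : ℚ) =
    (2 * l * k + 1) ^ m + 2 * ∑ i ∈ range k, (2 * l * i + 1 : ℚ) ^ m := by
  have hbinom : ∀ x : ℚ, (2 * l * x + 1) ^ m =
      ∑ j ∈ range (m + 1), m.choose j * (2 * l : ℚ) ^ j * x ^ j := fun x => by
    rw [add_pow]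
    exact sum_congr rfl fun j _ => by ring
  simp only [qnlEhrhartPoly, eval_finsetSum, eval_mul, eval_C, eval_add, eval_pow, eval_X,
    eval_ofNat, eval_powerSumPoly, hbinom, mul_add, sum_add_distrib, mul_sum]
  rw [sum_comm (s := range k)]
  congr 1
  exact sum_congr rfl fun j _ => sum_congr rfl fun i _ => by ring

theorem coeff_qnlEhrhartPoly (p l : ℕ) : (qnlEhrhartPoly (p + 2) l).coeff (p + 1) =
    (p + 2) * ((2 * l) ^ (p + 2) / 6 + (2 * l) ^ p) := by
  -- only `j = p, p + 1, p + 2` contribute, through the Bernoulli numbers `B₀, B₁, B₂`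
  have hlow : ∀ j ∈ range p,
      (C ((p + 2).choose j * (2 * l : ℚ) ^ j) * (X ^ j + 2 * powerSumPoly j)).coeff (p + 1) = 0 :=
    fun j hj => by
      have hj := mem_range.mp hj
      simp only [coeff_C_mul, coeff_add, coeff_X_pow, coeff_ofNat_mul,
        coeff_powerSumPoly _ p.succ_ne_zero]
      simp [show p + 1 ≠ j by omega, show ¬ p + 1 ≤ j + 1 by omega]
  rw [qnlEhrhartPoly, finsetSum_coeff, sum_range_succ, sum_range_succ, sum_range_succ,
    sum_eq_zero hlow]
  simp only [coeff_C_mul, coeff_add, coeff_X_pow, coeff_ofNat_mul,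
    coeff_powerSumPoly _ p.succ_ne_zero]
  have hc1 : ((p + 2).choose p : ℚ) = (p + 2) * (p + 1) / 2 := by
    rw [Nat.choose_symm_add, Nat.cast_choose_two]; push_cast; ring
  have hc2 : ((p + 2 + 1).choose (p + 1) : ℚ) = (p + 3) * (p + 2) / 2 := by
    rw [show p + 2 + 1 = p + 1 + 2 by ring, Nat.choose_symm_add, Nat.cast_choose_two]
    push_cast; ring
  simp [hc1, hc2]
  field_simp
  ring

theorem eq_coeff_of_forall_sum_eq_eval {d i : ℕ} {a : ℕ → ℝ} {P : ℝ[X]}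
    (h : ∀ k : ℕ, 1 ≤ k → ∑ j ∈ range d, a j * (k : ℝ) ^ j = P.eval (k : ℝ))
    (hi : i < d) :
    a i = P.coeff i := by
  have hP : ∑ j ∈ range d, C (a j) * X ^ j = P := by
    refine eq_of_infinite_eval_eq _ _ (Set.infinite_of_injective_forall_mem
      (f := fun k : ℕ => (k + 1 : ℝ)) (fun a b hab => by simpa using hab) fun k => ?_)
    simpa [eval_finsetSum] using h (k + 1) (by omega)
  rw [← hP, finsetSum_coeff]
  simp [hi]

theorem eq_coeff_of_ehrhart_Qnl {p l : ℕ} {a : ℕ → ℝ}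
    (h : ∀ k : ℕ, 1 ≤ k →
      (Nat.card ↥((k : ℝ) • Qnl (p + 3) l ∩ intLattice (p + 3)) : ℝ) =
        ∑ i ∈ range (p + 3 + 1), a i * (k : ℝ) ^ i) :
    a (p + 1) = (p + 2) * ((2 * l) ^ (p + 2) / 6 + (2 * l) ^ p) := by
  have hcard : ∀ k : ℕ, 1 ≤ k →
      (Nat.card ↥((k : ℝ) • Qnl (p + 3) l ∩ intLattice (p + 3)) : ℚ) =
        (qnlEhrhartPoly (p + 2) l).eval (k : ℚ) := fun k hk => by
    rw [card_smul_Qnl_inter_intLattice (p + 2) l k hk, sum_Icc_neg_sub_natAbs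
      (fun i => (2 * l * i + 1) ^ (p + 2)), eval_qnlEhrhartPoly]
    push_cast [smul_eq_mul]
    rfl
  rw [eq_coeff_of_forall_sum_eq_eval (a := a) (i := p + 1)
    (P := (qnlEhrhartPoly (p + 2) l).map (Rat.castHom ℝ))
    (fun k hk => by rw [← h k hk, eval_natCast_map, ← hcard k hk]; simp) (by omega),
    coeff_map, coeff_qnlEhrhartPoly, Rat.coe_castHom]
  push_cast
  ring

/-- Proposition: for `n ≥ 3` and any constant `c > 0` there is an `l ∈ ℕ` with
`g_{n−2}(Q^n_l) > c · σ_{n−2}(Q^n_l)`, where `σ_i(Q^n_l)` is the `i`-th elementary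
symmetric polynomial in `1/λ_1(DQ^n_l),…,1/λ_n(DQ^n_l)`. -/
theorem stmt15 (n : ℕ) (hn : 3 ≤ n)
    (g : ℕ → ℕ → ℝ)
    (hg : ∀ l : ℕ, 1 ≤ l → ∀ k : ℕ, 1 ≤ k →
      (Nat.card ↥((k : ℝ) • Qnl n l ∩ intLattice n) : ℝ) =
        ∑ i ∈ Finset.range (n + 1), g l i * (k : ℝ) ^ i)
    (c : ℝ) (hc : 0 < c) :
    ∃ l : ℕ, 1 ≤ l ∧
      g l (n - 2) > c * ∑ I ∈ (Finset.univ : Finset (Fin n)).powersetCard (n - 2),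
        ∏ j ∈ I, 1 / succMinima (Qnl n l - Qnl n l) ((j : ℕ) + 1) := by
  obtain ⟨p, rfl⟩ : ∃ p, n = p + 3 := ⟨n - 3, by omega⟩
  obtain ⟨l, hl⟩ := exists_nat_gt (3 * c * (p + 3).choose (p + 1))
  have hl1 : 1 ≤ l := by
    have : (0 : ℝ) < l := lt_of_le_of_lt (by positivity) hl
    exact_mod_cast this
  refine ⟨l, hl1, ?_⟩
  have hdiff : ∀ x ∈ Qnl (p + 3) l - Qnl (p + 3) l, ‖x‖ ≤ 2 * l := by
    rintro _ ⟨a, ha, b, hb, rfl⟩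
    linarith [norm_sub_le a b, norm_le_of_mem_Qnl hl1 ha, norm_le_of_mem_Qnl hl1 hb]
  set X : ℝ := 2 * l
  have hX : 0 < X := by positivity
  rw [show p + 3 - 2 = p + 1 by omega, eq_coeff_of_ehrhart_Qnl (hg l hl1)]
  calc c * ∑ I ∈ (univ : Finset (Fin (p + 3))).powersetCard (p + 1),
        ∏ j ∈ I, 1 / succMinima (Qnl (p + 3) l - Qnl (p + 3) l) ((j : ℕ) + 1)
      ≤ c * ((p + 3).choose (p + 1) * X ^ (p + 1)) := by
        gcongr; exact sum_prod_one_div_succMinima_le hX hdiff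
    _ < X ^ (p + 2) / 6 := by
        rw [pow_succ X (p + 1)]
        have : 6 * (c * (p + 3).choose (p + 1)) < X := by linarith
        nlinarith [pow_pos hX (p + 1)]
    _ ≤ (p + 2) * (X ^ (p + 2) / 6 + X ^ p) := by
        nlinarith [pow_pos hX (p + 2), pow_pos hX p]
end

section
/- For l ∈ ℕ let Q^n_l = conv( (l·[−1,1]^{n−1} × {0}) ∪ {e_n, −e_n} ) ⊂ ℝ^n. Then for n ≥ 3: g_{n−2}(Q^n_l) = (n−1)·(2l)^{n−3}·((2/3)l² + 1), and for n ≥ 4: g_{n−3}(Q^n_l) = (2/3)·C(n−1,2)·(2l)^{n−4}·(2l² + 1), where C(a,b) is the binomial coefficient. -/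
open Finset Pointwise MeasureTheory

/-!
Cut the bipyramid `k • Q^{m+1}_l` by the hyperplanes `x_{m+1} = t`, `|t| ≤ k`: the slice at
height `t` is the cube `l (k - |t|) · [-1,1]^m`, which has `(2l(k - |t|) + 1)^m` lattice points.
Summing over `t` gives `(2lk+1)^m + 2 ∑_{j<k} (2lj+1)^m`, and Faulhaber's formula turns the sum of
`m`-th powers into a polynomial in `k`. Only the Bernoulli numbers `B₀, …, B₃` enter the
coefficients of `k^{n-2}` and `k^{n-3}` (where `n = m + 1`), and `B₃ = 0`.
-/

open Polynomial (C X)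
open scoped Polynomial

/-- For `a ≥ 0` and `c > 0`, this is `c • conv((a·[-1,1]^m × {0}) ∪ {±e_{m+1}})`. -/
def bipyramid (m : ℕ) (a c : ℝ) : Set (Fin (m + 1) → ℝ) :=
  {x | |x (Fin.last m)| ≤ c ∧ ∀ i : Fin m, |x i.castSucc| + a * |x (Fin.last m)| ≤ a * c}

lemma convexOn_abs_apply {ι : Type*} (j : ι) : ConvexOn ℝ Set.univ fun x : ι → ℝ => |x j| := by
  simpa [Function.comp_def] using
    (convexOn_univ_norm (E := ℝ)).comp_linearMap (LinearMap.proj (R := ℝ) (φ := fun _ : ι => ℝ) j)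

lemma convex_bipyramid (m : ℕ) {a : ℝ} (ha : 0 ≤ a) (c : ℝ) : Convex ℝ (bipyramid m a c) := by
  have hlast := convexOn_abs_apply (Fin.last m)
  have hcube (i : Fin m) := (convexOn_abs_apply i.castSucc).add (hlast.smul ha)
  simpa [bipyramid, Set.ofPred_and, Set.ofPred_forall] using
    (hlast.convex_le c).inter (convex_iInter fun i => (hcube i).convex_le (a * c))

lemma mem_cubeSlice_succ {m l : ℕ} {x : Fin (m + 1) → ℝ} :
    x ∈ cubeSlice (m + 1) l ↔ x (Fin.last m) = 0 ∧ ∀ i : Fin m, |x i.castSucc| ≤ l := by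
  simp only [cubeSlice, Set.mem_ofPred_eq, Fin.forall_fin_succ', Fin.val_castSucc, Fin.val_last,
    add_tsub_cancel_right, Fin.is_lt, lt_self_iff_false, true_implies, and_true,
    true_and, (Fin.is_lt _).ne, IsEmpty.forall_iff]
  tauto

lemma lastUnitVec_succ (m : ℕ) : lastUnitVec (m + 1) = Pi.single (Fin.last m) 1 := by
  ext j
  simp [lastUnitVec, Pi.single_apply, Fin.ext_iff]

theorem Qnl_succ_eq_bipyramid (m l : ℕ) : Qnl (m + 1) l = bipyramid m l 1 := by
  apply subset_antisymm
  · refine convexHull_min ?_ (convex_bipyramid m l.cast_nonneg 1)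
    rintro x (hx | rfl | rfl)
    · rw [mem_cubeSlice_succ] at hx
      simpa [bipyramid, hx.1] using hx.2
    all_goals simp [bipyramid, lastUnitVec_succ, (Fin.castSucc_lt_last _).ne]
  · rintro x ⟨hs, hx⟩
    set s := x (Fin.last m)
    have hx' (i : Fin m) : |x i.castSucc| ≤ l * (1 - |s|) := by linarith [hx i]
    set y : Fin (m + 1) → ℝ := Fin.snoc (fun i => x i.castSucc / (1 - |s|)) 0
    set v : Fin (m + 1) → ℝ := if 0 ≤ s then lastUnitVec (m + 1) else -lastUnitVec (m + 1)
    have hy : y ∈ cubeSlice (m + 1) l := by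
      refine mem_cubeSlice_succ.2 ⟨by simp [y], fun i => ?_⟩
      simpa [y, abs_div, abs_of_nonneg (by linarith : 0 ≤ 1 - |s|)] using
        div_le_of_le_mul₀ (by linarith) l.cast_nonneg (hx' i)
    have hv : v ∈ ({lastUnitVec (m + 1), -lastUnitVec (m + 1)} : Set _) := by
      unfold v; split_ifs <;> simp
    unfold Qnl
    refine segment_subset_convexHull (Set.mem_union_left _ hy) (Set.mem_union_right _ hv)
      ⟨1 - |s|, |s|, by linarith, abs_nonneg s, by ring, ?_⟩
    ext j
    induction j using Fin.lastCases with
    | last =>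
      simp only [y, v, lastUnitVec_succ]
      split_ifs with h
      · simp [abs_of_nonneg h, s]
      · simp [abs_of_neg (not_le.1 h), s]
    | cast i =>
      have h0 : 1 - |s| = 0 → x i.castSucc = 0 := fun h =>
        abs_nonpos_iff.1 (by simpa [h] using hx' i)
      simp only [y, v, lastUnitVec_succ]
      split_ifs <;> simp [mul_div_cancel_of_imp' h0, (Fin.castSucc_lt_last i).ne]

lemma smul_bipyramid_one (m : ℕ) (a : ℝ) {c : ℝ} (hc : 0 < c) :
    c • bipyramid m a 1 = bipyramid m a c := by
  ext x
  rw [Set.mem_smul_set_iff_inv_smul_mem₀ hc.ne']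
  simp only [bipyramid, Set.mem_ofPred_eq, Pi.smul_apply, smul_eq_mul, abs_mul, abs_inv,
    abs_of_pos hc]
  refine and_congr (by rw [inv_mul_le_iff₀ hc, mul_one]) (forall_congr' fun i => ?_)
  rw [mul_left_comm, ← mul_add, inv_mul_le_iff₀ hc, mul_one, mul_comm c]

lemma natCard_inter_intLattice (n : ℕ) (S : Set (Fin n → ℝ)) :
    Nat.card ↥(S ∩ intLattice n) = Nat.card ↥((fun (z : Fin n → ℤ) j => (z j : ℝ)) ⁻¹' S) := by
  have hrange : intLattice n = Set.range fun (z : Fin n → ℤ) j => (z j : ℝ) := by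
    ext x
    simp only [intLattice, Set.mem_ofPred_eq, Set.mem_range, funext_iff, Classical.skolem, eq_comm]
  rw [hrange, ← Set.image_preimage_eq_inter_range, Nat.card_image_of_injective]
  intro z z' h
  funext j
  simpa using congrFun h j

lemma natCard_intPoints_bipyramid (m l k : ℕ) :
    (Nat.card ↥((fun (z : Fin (m + 1) → ℤ) j => (z j : ℝ)) ⁻¹' bipyramid m l k) : ℚ) =
      ∑ t ∈ Icc (-(k : ℤ)) k, (2 * l * (k - |(t : ℚ)|) + 1) ^ m := by
  set B : ℤ → ℤ := fun t => l * (k - |t|)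
  let F := (Icc (-(k : ℤ)) k).sigma fun t => Fintype.piFinset fun _ : Fin m => Icc (-B t) (B t)
  have hsnoc :
      Function.Injective fun p : Σ _ : ℤ, Fin m → ℤ => Fin.snoc (α := fun _ => ℤ) p.2 p.1 :=
    fun ⟨t, y⟩ ⟨t', y'⟩ h => by obtain ⟨rfl, rfl⟩ := Fin.snoc_injective2 h; rfl
  have hpoints : (fun (z : Fin (m + 1) → ℤ) j => (z j : ℝ)) ⁻¹' bipyramid m l k =
      F.image fun p => Fin.snoc (α := fun _ => ℤ) p.2 p.1 := by
    ext z
    have hz : z ∈ (fun (z : Fin (m + 1) → ℤ) j => (z j : ℝ)) ⁻¹' bipyramid m l k ↔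
        |z (Fin.last m)| ≤ k ∧ ∀ i : Fin m, |z i.castSucc| ≤ B (z (Fin.last m)) := by
      simp only [Set.mem_preimage, bipyramid, Set.mem_ofPred_eq, B, mul_sub, le_sub_iff_add_le]
      norm_cast
    rw [hz, coe_image, Set.mem_image]
    constructor
    · rintro ⟨hlast, hinit⟩
      refine ⟨⟨z (Fin.last m), Fin.init z⟩, ?_, Fin.snoc_init_self z⟩
      simp only [F, mem_coe, mem_sigma, mem_Icc, Fintype.mem_piFinset, ← abs_le]
      exact ⟨hlast, hinit⟩
    · rintro ⟨⟨t, y⟩, hp, rfl⟩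
      simp only [F, mem_coe, mem_sigma, mem_Icc, Fintype.mem_piFinset, ← abs_le] at hp
      simpa only [Fin.snoc_last, Fin.snoc_castSucc] using hp
  rw [hpoints, Nat.card_coe_set_eq, Set.ncard_coe_finset, card_image_of_injective _ hsnoc,
    card_sigma, Nat.cast_sum]
  refine sum_congr rfl fun t ht => ?_
  have hB : 0 ≤ B t := mul_nonneg l.cast_nonneg (sub_nonneg.2 (abs_le.2 (mem_Icc.1 ht)))
  rw [Fintype.card_piFinset, prod_const, card_univ, Fintype.card_fin, Nat.cast_pow, Int.card_Icc,
    ← Int.cast_natCast, Int.toNat_of_nonneg (by linarith)]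
  push_cast [B]
  ring

lemma sum_Icc_neg_of_even {M : Type*} [AddCommMonoid M] {f : ℤ → M} (hf : Function.Even f)
    (k : ℕ) : ∑ t ∈ Icc (-(k : ℤ)) k, f t = f 0 + 2 • ∑ j ∈ range k, f (j + 1) := by
  induction k with
  | zero => simp
  | succ k ih =>
    have hIcc : Icc (-((k + 1 : ℕ) : ℤ)) (k + 1 : ℕ) =
        insert (-(k + 1 : ℤ)) (insert (k + 1 : ℤ) (Icc (-(k : ℤ)) k)) := by
      ext; simp; omega
    rw [hIcc, sum_insert (by simp; omega), sum_insert (by simp), ih, sum_range_succ, hf]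
    abel

noncomputable def powSumPoly (r : ℕ) : ℚ[X] :=
  ∑ i ∈ range (r + 1), C (bernoulli i * (r + 1).choose i / (r + 1)) * X ^ (r + 1 - i)

lemma eval_powSumPoly (r k : ℕ) : (powSumPoly r).eval (k : ℚ) = ∑ j ∈ range k, (j : ℚ) ^ r := by
  rw [sum_range_pow, powSumPoly, Polynomial.eval_finsetSum]
  refine sum_congr rfl fun i _ => ?_
  simp only [Polynomial.eval_mul, Polynomial.eval_C, Polynomial.eval_pow, Polynomial.eval_X]
  ring

lemma coeff_powSumPoly {r q i : ℕ} (hi : i ≤ r) (hq : q + i = r + 1) :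
    (powSumPoly r).coeff q = bernoulli i * (r + 1).choose i / (r + 1) := by
  rw [powSumPoly, Polynomial.finsetSum_coeff, sum_eq_single_of_mem i (mem_range.2 (by omega))]
  · rw [Polynomial.coeff_C_mul_X_pow, if_pos (by omega)]
  · intro j _ hj
    rw [Polynomial.coeff_C_mul_X_pow, if_neg (by omega)]

lemma coeff_powSumPoly_of_lt {r q : ℕ} (h : r + 1 < q) : (powSumPoly r).coeff q = 0 := by
  rw [powSumPoly, Polynomial.finsetSum_coeff]
  exact sum_eq_zero fun i _ => by rw [Polynomial.coeff_C_mul_X_pow, if_neg (by omega)]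

noncomputable def sumRangePoly (p : ℚ[X]) : ℚ[X] :=
  p.sum fun r a => C a * powSumPoly r

lemma eval_sumRangePoly (p : ℚ[X]) (k : ℕ) :
    (sumRangePoly p).eval (k : ℚ) = ∑ j ∈ range k, p.eval (j : ℚ) := by
  rw [sumRangePoly, Polynomial.sum_over_range p (f := fun r a => C a * powSumPoly r) (by simp)]
  simp only [Polynomial.eval_finsetSum, Polynomial.eval_mul, Polynomial.eval_C, eval_powSumPoly,
    Polynomial.eval_eq_sum_range (p := p), mul_sum]
  exact sum_comm

lemma coeff_sumRangePoly (p : ℚ[X]) (q : ℕ) {N : ℕ} (hN : p.natDegree < N) :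
    (sumRangePoly p).coeff q = ∑ r ∈ range N, p.coeff r * (powSumPoly r).coeff q := by
  rw [sumRangePoly,
    Polynomial.sum_over_range' p (f := fun r a => C a * powSumPoly r) (by simp) N hN,
    Polynomial.finsetSum_coeff]
  simp only [Polynomial.coeff_C_mul]

lemma coeff_succ_sumRangePoly {p : ℚ[X]} {t : ℕ} (hp : p.natDegree ≤ t + 3) :
    (sumRangePoly p).coeff (t + 1) =
      p.coeff t / (t + 1) - p.coeff (t + 1) / 2 + (t + 2) * p.coeff (t + 2) / 12 := by
  have hlow : ∑ r ∈ range t, p.coeff r * (powSumPoly r).coeff (t + 1) = 0 :=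
    sum_eq_zero fun r hr => by rw [coeff_powSumPoly_of_lt (by simp at hr; omega), mul_zero]
  rw [coeff_sumRangePoly p _ (Nat.lt_succ_of_le hp), sum_range_succ, sum_range_succ, sum_range_succ,
    sum_range_succ, hlow, coeff_powSumPoly (i := 0) (by omega) (by omega),
    coeff_powSumPoly (i := 1) (by omega) (by omega),
    coeff_powSumPoly (i := 2) (by omega) (by omega),
    coeff_powSumPoly (i := 3) (by omega) (by omega), bernoulli_zero, bernoulli_one, bernoulli_two,
    bernoulli_eq_zero_of_odd (by decide) (by norm_num), Nat.cast_choose_two]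
  push_cast [Nat.choose_zero_right, Nat.choose_one_right]
  field_simp
  ring

lemma coeff_C_mul_X_add_one_pow {R : Type*} [CommSemiring R] (a : R) (m r : ℕ) :
    ((C a * X + 1) ^ m).coeff r = m.choose r * a ^ r := by
  have : (C a * X + 1) ^ m = ((X + 1) ^ m).comp (C a * X) := by
    simp [Polynomial.add_comp]
  rw [this, Polynomial.comp_C_mul_X_coeff, Polynomial.coeff_X_add_one_pow]

lemma natDegree_C_mul_X_add_one_pow_le {R : Type*} [CommSemiring R] (a : R) (m : ℕ) :
    ((C a * X + 1) ^ m).natDegree ≤ m :=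
  Polynomial.natDegree_le_iff_coeff_eq_zero.2 fun N hN => by
    rw [coeff_C_mul_X_add_one_pow, Nat.choose_eq_zero_of_lt hN, Nat.cast_zero, zero_mul]

noncomputable def ehrhartPoly (m l : ℕ) : ℚ[X] :=
  (C (2 * l : ℚ) * X + 1) ^ m + 2 * sumRangePoly ((C (2 * l : ℚ) * X + 1) ^ m)

lemma eval_ehrhartPoly (m l k : ℕ) : (ehrhartPoly m l).eval (k : ℚ) =
    (2 * l * k + 1) ^ m + 2 * ∑ j ∈ range k, (2 * l * j + 1 : ℚ) ^ m := by
  simp [ehrhartPoly, eval_sumRangePoly]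

lemma coeff_succ_ehrhartPoly {m t : ℕ} (l : ℕ) (hm : m ≤ t + 3) :
    (ehrhartPoly m l).coeff (t + 1) =
      2 * m.choose t * (2 * l) ^ t / (t + 1) +
        (t + 2) * m.choose (t + 2) * (2 * l) ^ (t + 2) / 6 := by
  rw [ehrhartPoly, Polynomial.coeff_add, Polynomial.coeff_ofNat_mul,
    coeff_succ_sumRangePoly ((natDegree_C_mul_X_add_one_pow_le _ m).trans hm)]
  simp only [coeff_C_mul_X_add_one_pow]
  ring

lemma coeff_ehrhartPoly_sub_two (t l : ℕ) :
    (ehrhartPoly (t + 2) l).coeff (t + 1) = (t + 2) * (2 * l) ^ t * (2 / 3 * l ^ 2 + 1) := by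
  rw [coeff_succ_ehrhartPoly l (by omega), Nat.choose_symm_of_eq_add (by omega : t + 2 = t + 2),
    Nat.choose_self, Nat.cast_choose_two]
  push_cast
  field_simp
  ring

lemma coeff_ehrhartPoly_sub_three (t l : ℕ) :
    (ehrhartPoly (t + 3) l).coeff (t + 1) =
      2 / 3 * (t + 3).choose 2 * (2 * l) ^ t * (2 * l ^ 2 + 1) := by
  rw [coeff_succ_ehrhartPoly l le_rfl, Nat.choose_symm_of_eq_add (by omega : t + 3 = t + 3),
    Nat.choose_symm_of_eq_add (by omega : t + 3 = t + 2 + 1), Nat.choose_one_right]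
  have hchoose : ((t + 3).choose 3 : ℚ) = (t + 3) * (t + 2) * (t + 1) / 6 := by
    have h : ((t + 3).choose 3 : ℚ) * 3 = (t + 3) * (t + 2).choose 2 := by
      exact_mod_cast (Nat.add_one_mul_choose_eq (t + 2) 2).symm
    rw [Nat.cast_choose_two] at h
    push_cast at h
    linarith
  rw [hchoose, Nat.cast_choose_two]
  push_cast
  field_simp
  ring

lemma natCard_smul_Qnl (m l : ℕ) {k : ℕ} (hk : 0 < k) :
    (Nat.card ↥((k : ℝ) • Qnl (m + 1) l ∩ intLattice (m + 1)) : ℚ) =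
      (ehrhartPoly m l).eval (k : ℚ) := by
  rw [Qnl_succ_eq_bipyramid, smul_bipyramid_one m _ (Nat.cast_pos.2 hk), natCard_inter_intLattice,
    natCard_intPoints_bipyramid, sum_Icc_neg_of_even (fun t => by simp), eval_ehrhartPoly,
    ← sum_range_reflect (fun j => (2 * l * j + 1 : ℚ) ^ m) k]
  simp only [Int.cast_zero, abs_zero, sub_zero, nsmul_eq_mul, Nat.cast_ofNat]
  congr 2
  refine sum_congr rfl fun j hj => ?_
  have hjk : 1 + j ≤ k := by rw [add_comm]; exact mem_range.1 hj
  rw [Nat.sub_sub, Nat.cast_sub hjk, Int.cast_add, Int.cast_natCast, Int.cast_one,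
    abs_of_nonneg (by positivity)]
  push_cast
  ring

lemma eq_coeff_of_eval_natCast_eq {R : Type*} [CommRing R] [IsDomain R] [CharZero R] {P : R[X]}
    {g : ℕ → R} {N : ℕ} (h : ∀ k : ℕ, 1 ≤ k → P.eval (k : R) = ∑ i ∈ range N, g i * (k : R) ^ i)
    {i : ℕ} (hi : i < N) : g i = P.coeff i := by
  have hP : P = ∑ i ∈ range N, C (g i) * X ^ i := by
    refine Polynomial.eq_of_infinite_eval_eq _ _ <|
      Set.infinite_of_injective_forall_mem (f := fun k : ℕ => ((k + 1 : ℕ) : R)) ?_ fun k => ?_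
    · exact fun a b hab => by simpa using hab
    · simpa [Polynomial.eval_finsetSum] using h (k + 1) (by omega)
  rw [hP, Polynomial.finsetSum_coeff, sum_eq_single_of_mem i (mem_range.2 hi)]
  · simp
  · intro j _ hj
    rw [Polynomial.coeff_C_mul_X_pow, if_neg hj.symm]

theorem stmt17_general (n l : ℕ)
    (g : ℕ → ℝ)
    (hg : ∀ k : ℕ, 1 ≤ k →
      (Nat.card ↥((k : ℝ) • Qnl n l ∩ intLattice n) : ℝ) =
        ∑ i ∈ Finset.range (n + 1), g i * (k : ℝ) ^ i) :
    (3 ≤ n → g (n - 2) =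
      ((n : ℝ) - 1) * (2 * (l : ℝ)) ^ (n - 3) * ((2 / 3) * (l : ℝ) ^ 2 + 1)) ∧
    (4 ≤ n → g (n - 3) =
      (2 / 3) * ((n - 1).choose 2 : ℝ) * (2 * (l : ℝ)) ^ (n - 4) * (2 * (l : ℝ) ^ 2 + 1)) := by
  have hcoeff (m : ℕ) (hm : n = m + 1) (i : ℕ) (hi : i ≤ n) :
      g i = (ehrhartPoly m l).coeff i := by
    subst hm
    refine (eq_coeff_of_eval_natCast_eq (P := (ehrhartPoly m l).map (Rat.castHom ℝ))
      (fun k hk => ?_) (Nat.lt_succ_of_le hi)).trans (by rw [Polynomial.coeff_map, eq_ratCast])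
    rw [← hg k hk, Polynomial.eval_natCast_map, ← natCard_smul_Qnl m l hk, eq_ratCast,
      Rat.cast_natCast]
  refine ⟨fun hn => ?_, fun hn => ?_⟩
  · obtain ⟨t, rfl⟩ : ∃ t, n = t + 3 := ⟨n - 3, by omega⟩
    rw [show t + 3 - 2 = t + 1 by omega, hcoeff (t + 2) rfl _ (by omega), coeff_ehrhartPoly_sub_two]
    push_cast
    ring
  · obtain ⟨t, rfl⟩ : ∃ t, n = t + 4 := ⟨n - 4, by omega⟩
    rw [show t + 4 - 3 = t + 1 by omega, hcoeff (t + 3) rfl _ (by omega),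
      coeff_ehrhartPoly_sub_three]
    push_cast
    ring

/-- Explicit Ehrhart coefficients of `Q^n_l`:
for `n ≥ 3`, `g_{n−2}(Q^n_l) = (n−1)(2l)^{n−3}((2/3)l² + 1)`, and
for `n ≥ 4`, `g_{n−3}(Q^n_l) = (2/3)·C(n−1,2)·(2l)^{n−4}(2l² + 1)`. -/
theorem stmt17 (n l : ℕ) (hl : 1 ≤ l)
    (g : ℕ → ℝ)
    (hg : ∀ k : ℕ, 1 ≤ k →
      (Nat.card ↥((k : ℝ) • Qnl n l ∩ intLattice n) : ℝ) =
        ∑ i ∈ Finset.range (n + 1), g i * (k : ℝ) ^ i) :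
    (3 ≤ n → g (n - 2) =
      ((n : ℝ) - 1) * (2 * (l : ℝ)) ^ (n - 3) * ((2 / 3) * (l : ℝ) ^ 2 + 1)) ∧
    (4 ≤ n → g (n - 3) =
      (2 / 3) * ((n - 1).choose 2 : ℝ) * (2 * (l : ℝ)) ^ (n - 4) * (2 * (l : ℝ) ^ 2 + 1)) :=
  stmt17_general n l g hg
end
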